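/- arXiv:2511.02012 — 4 statements merged into one kernel-verified Lean document; each statement's English description precedes it below -/
import Mathlib

section
/- Let λ ≥ 1 and let q ∈ [2, ∞) with q ≠ 4, and let q' = q/(q − 1) be the conjugate exponent. Set μ = 1/4 if 2 ≤ q < 4 and μ = 1/2 − 1/q if q > 4. Suppose p : ℝ → [0, ∞) is measurable and satisfies p(r) ≤ λ(1 + λ|r|)^(−1/2) whenever |r| < 1, and p(r) ≤ λ^(1/2) e^(−|r|/2) whenever |r| ≥ 1. Then there is a constant C, depending only on q, such that for every h ∈ L^{q'}(ℝ), the function t ↦ ∫_ℝ p(|t − s|) h(s) ds lies in L^q(ℝ) with ‖∫_ℝ p(|· − s|) h(s) ds‖_{L^q(ℝ)} ≤ C λ^(2μ) ‖h‖_{L^{q'}(ℝ)}. -/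
/-!
The operator is the convolution of `h` with the kernel `k r = p |r|`, so Young's inequality with
`1/q' + 1/(q/2) = 1 + 1/q` bounds it by `‖k‖_{q/2}`. On `|r| ≥ 1` the kernel decays exponentially
and contributes `O(λ^(q/4))` to `∫ k^(q/2)`. On `|r| < 1` it is at most `min(λ, (λ/|r|)^(1/2))`:
for `q < 4` the singularity `|r|^(-q/4)` is integrable and gives `λ^(q/4)`, while for `q > 4`
splitting at `|r| = 1/λ` gives `λ^(q/2-1)`. The `(q/2)`-th root of either bound is `λ^(2μ(q))`.
-/

open MeasureTheory Real

open ENNReal Set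

open scoped Convolution

section Young

theorem ENNReal.lintegral_rpow_mul_rpow_mul_rpow_le {α : Type*} [MeasurableSpace α]
    {μ : Measure α} {f g h : α → ℝ≥0∞} (hf : AEMeasurable f μ) (hg : AEMeasurable g μ)
    (hh : AEMeasurable h μ) {a b c : ℝ} (ha : 0 ≤ a) (hb : 0 ≤ b) (hc : 0 ≤ c)
    (habc : a + b + c = 1) :
    ∫⁻ x, f x ^ a * g x ^ b * h x ^ c ∂μ ≤
      (∫⁻ x, f x ∂μ) ^ a * (∫⁻ x, g x ∂μ) ^ b * (∫⁻ x, h x ∂μ) ^ c := by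
  have := ENNReal.lintegral_prod_norm_pow_le (μ := μ) Finset.univ (f := ![f, g, h])
    (p := ![a, b, c]) (by intro i _; fin_cases i <;> assumption)
    (by simpa [Fin.sum_univ_three] using habc) (by intro i _; fin_cases i <;> assumption)
  simpa [Fin.prod_univ_three, mul_assoc] using this

theorem ENNReal.rpow_rpow_mul_rpow_rpow_sub (x : ℝ≥0∞) {s t : ℝ} (hs : 0 < s) (ht : 0 ≤ t)
    (hts : t ≤ 1 / s) : (x ^ s) ^ t * (x ^ s) ^ (1 / s - t) = x := by
  rw [← ENNReal.rpow_add_of_nonneg _ _ ht (by linarith), add_sub_cancel, ← ENNReal.rpow_mul,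
    mul_one_div_cancel hs.ne', ENNReal.rpow_one]

theorem le_of_one_div_add_one_div_eq {p q r : ℝ} (hp : 0 < p) (hq : 1 ≤ q) (hr : 0 < r)
    (hpqr : 1 / p + 1 / q = 1 + 1 / r) : p ≤ r := by
  have : 1 / q ≤ 1 := by rw [div_le_one (by linarith)]; exact hq
  exact (one_div_le_one_div hr hp).mp (by linarith)

-- Hölder with three factors, after writing `f g = (f^p g^q)^(1/r) (f^p)^(1/p-1/r) (g^q)^(1/q-1/r)`.
theorem ENNReal.lintegral_mul_le_young {α : Type*} [MeasurableSpace α] {μ : Measure α}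
    {f g : α → ℝ≥0∞} (hf : AEMeasurable f μ) (hg : AEMeasurable g μ) {p q r : ℝ}
    (hp : 1 ≤ p) (hq : 1 ≤ q) (hr : 0 < r) (hpqr : 1 / p + 1 / q = 1 + 1 / r) :
    ∫⁻ x, f x * g x ∂μ ≤ (∫⁻ x, f x ^ p * g x ^ q ∂μ) ^ (1 / r) *
      (∫⁻ x, f x ^ p ∂μ) ^ (1 / p - 1 / r) * (∫⁻ x, g x ^ q ∂μ) ^ (1 / q - 1 / r) := by
  have hr' : (0 : ℝ) ≤ 1 / r := by positivity
  have hpr : 1 / r ≤ 1 / p := one_div_le_one_div_of_le (by linarith)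
    (le_of_one_div_add_one_div_eq (by linarith) hq hr hpqr)
  have hqr : 1 / r ≤ 1 / q := one_div_le_one_div_of_le (by linarith)
    (le_of_one_div_add_one_div_eq (by linarith) hp hr (by linarith))
  calc ∫⁻ x, f x * g x ∂μ
      = ∫⁻ x, (f x ^ p * g x ^ q) ^ (1 / r) * (f x ^ p) ^ (1 / p - 1 / r) *
          (g x ^ q) ^ (1 / q - 1 / r) ∂μ := by
        congr 1 with x
        rw [ENNReal.mul_rpow_of_nonneg _ _ hr', mul_assoc, mul_mul_mul_comm,
          ENNReal.rpow_rpow_mul_rpow_rpow_sub _ (by linarith) hr' hpr,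
          ENNReal.rpow_rpow_mul_rpow_rpow_sub _ (by linarith) hr' hqr]
    _ ≤ _ := ENNReal.lintegral_rpow_mul_rpow_mul_rpow_le ((hf.pow_const p).mul (hg.pow_const q))
        (hf.pow_const p) (hg.pow_const q) hr' (by linarith) (by linarith) (by linarith)

theorem ENNReal.mul_rpow_sub_one (x : ℝ≥0∞) {e : ℝ} (he : 1 ≤ e) : x * x ^ (e - 1) = x ^ e := by
  conv_lhs => arg 1; rw [← ENNReal.rpow_one x]
  rw [← ENNReal.rpow_add_of_nonneg _ _ zero_le_one (by linarith), add_sub_cancel]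

variable {G : Type*} [AddCommGroup G] [MeasurableSpace G] [MeasurableAdd₂ G] [MeasurableNeg G]
  {μ : Measure G} [SFinite μ] [μ.IsAddLeftInvariant] [μ.IsNegInvariant]

theorem lintegral_convolution_rpow_le {f g : G → ℝ≥0∞} (hf : Measurable f) (hg : Measurable g)
    {p q r : ℝ} (hp : 1 ≤ p) (hq : 1 ≤ q) (hr : 0 < r) (hpqr : 1 / p + 1 / q = 1 + 1 / r) :
    ∫⁻ t, (∫⁻ s, f s * g (t - s) ∂μ) ^ r ∂μ ≤
      (∫⁻ s, f s ^ p ∂μ) ^ (r / p) * (∫⁻ s, g s ^ q ∂μ) ^ (r / q) := by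
  set A := ∫⁻ s, f s ^ p ∂μ
  set B := ∫⁻ s, g s ^ q ∂μ
  have hfp : Measurable fun s => f s ^ p := hf.pow_const p
  have hprod : Measurable fun z : G × G => f z.2 ^ p * g (z.1 - z.2) ^ q := by fun_prop
  have holder (t : G) : (∫⁻ s, f s * g (t - s) ∂μ) ^ r ≤
      (∫⁻ s, f s ^ p * g (t - s) ^ q ∂μ) * (A ^ (r / p - 1) * B ^ (r / q - 1)) := by
    have h := ENNReal.lintegral_mul_le_young (μ := μ) (g := fun s => g (t - s)) hf.aemeasurable
      (by fun_prop) hp hq hr hpqr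
    rw [lintegral_sub_left_eq_self (fun s => g s ^ q) t] at h
    calc (∫⁻ s, f s * g (t - s) ∂μ) ^ r
        ≤ ((∫⁻ s, f s ^ p * g (t - s) ^ q ∂μ) ^ (1 / r) * A ^ (1 / p - 1 / r) *
            B ^ (1 / q - 1 / r)) ^ r := ENNReal.rpow_le_rpow h hr.le
      _ = _ := by
        rw [ENNReal.mul_rpow_of_nonneg _ _ hr.le, ENNReal.mul_rpow_of_nonneg _ _ hr.le,
          ← ENNReal.rpow_mul, ← ENNReal.rpow_mul, ← ENNReal.rpow_mul, one_div_mul_cancel hr.ne',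
          ENNReal.rpow_one, mul_assoc]
        congr 3 <;> field_simp
  have tonelli : ∫⁻ t, ∫⁻ s, f s ^ p * g (t - s) ^ q ∂μ ∂μ = A * B := by
    rw [lintegral_lintegral_swap hprod.aemeasurable]
    have inner (s : G) : ∫⁻ t, f s ^ p * g (t - s) ^ q ∂μ = f s ^ p * B := by
      rw [lintegral_const_mul (f := fun t => g (t - s) ^ q) _ (by fun_prop),
        lintegral_sub_right_eq_self (fun t => g t ^ q)]
    simp_rw [inner]
    exact lintegral_mul_const _ hfp
  have hrp : 1 ≤ r / p := (one_le_div₀ (by linarith)).mpr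
    (le_of_one_div_add_one_div_eq (by linarith) hq hr hpqr)
  have hrq : 1 ≤ r / q := (one_le_div₀ (by linarith)).mpr
    (le_of_one_div_add_one_div_eq (by linarith) hp hr (by linarith))
  calc ∫⁻ t, (∫⁻ s, f s * g (t - s) ∂μ) ^ r ∂μ
      ≤ ∫⁻ t, (∫⁻ s, f s ^ p * g (t - s) ^ q ∂μ) * (A ^ (r / p - 1) * B ^ (r / q - 1)) ∂μ :=
        lintegral_mono holder
    _ = A * B * (A ^ (r / p - 1) * B ^ (r / q - 1)) := by
        rw [lintegral_mul_const _ hprod.lintegral_prod_right', tonelli]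
    _ = A ^ (r / p) * B ^ (r / q) := by
        rw [mul_mul_mul_comm, ENNReal.mul_rpow_sub_one A hrp, ENNReal.mul_rpow_sub_one B hrq]

theorem eLpNorm_lintegral_convolution_le {f g : G → ℝ≥0∞} (hf : Measurable f) (hg : Measurable g)
    {p q r : ℝ} (hp : 1 ≤ p) (hq : 1 ≤ q) (hr : 0 < r) (hpqr : 1 / p + 1 / q = 1 + 1 / r) :
    eLpNorm (fun t => ∫⁻ s, f s * g (t - s) ∂μ) (ENNReal.ofReal r) μ ≤
      eLpNorm f (ENNReal.ofReal p) μ * eLpNorm g (ENNReal.ofReal q) μ := by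
  have eLpNorm_eq {e : ℝ} (he : 0 < e) (φ : G → ℝ≥0∞) :
      eLpNorm φ (ENNReal.ofReal e) μ = (∫⁻ x, φ x ^ e ∂μ) ^ (1 / e) := by
    rw [eLpNorm_eq_lintegral_rpow_enorm_toReal (by simpa using he) ofReal_ne_top,
      toReal_ofReal he.le]
    rfl
  rw [eLpNorm_eq hr, eLpNorm_eq (by linarith) f, eLpNorm_eq (by linarith) g]
  calc (∫⁻ t, (∫⁻ s, f s * g (t - s) ∂μ) ^ r ∂μ) ^ (1 / r)
      ≤ ((∫⁻ s, f s ^ p ∂μ) ^ (r / p) * (∫⁻ s, g s ^ q ∂μ) ^ (r / q)) ^ (1 / r) :=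
        ENNReal.rpow_le_rpow (lintegral_convolution_rpow_le hf hg hp hq hr hpqr) (by positivity)
    _ = (∫⁻ s, f s ^ p ∂μ) ^ (1 / p) * (∫⁻ s, g s ^ q ∂μ) ^ (1 / q) := by
        rw [ENNReal.mul_rpow_of_nonneg _ _ (by positivity), ← ENNReal.rpow_mul,
          ← ENNReal.rpow_mul]
        congr 2 <;> field_simp

variable {𝕜 E E' F : Type*} [NontriviallyNormedField 𝕜] [NormedAddCommGroup E] [NormedSpace 𝕜 E]
  [NormedAddCommGroup E'] [NormedSpace 𝕜 E'] [NormedAddCommGroup F] [NormedSpace 𝕜 F]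
  [NormedSpace ℝ F] (L : E →L[𝕜] E' →L[𝕜] F)

theorem eLpNorm_convolution_le {f : G → E} {g : G → E'} (hf : AEStronglyMeasurable f μ)
    (hg : AEStronglyMeasurable g μ) {p q r : ℝ} (hp : 1 ≤ p) (hq : 1 ≤ q) (hr : 0 < r)
    (hpqr : 1 / p + 1 / q = 1 + 1 / r) :
    eLpNorm (f ⋆[L, μ] g) (ENNReal.ofReal r) μ ≤
      ‖L‖ₑ * eLpNorm f (ENNReal.ofReal p) μ * eLpNorm g (ENNReal.ofReal q) μ := by
  rw [convolution_congr L hf.ae_eq_mk hg.ae_eq_mk, eLpNorm_congr_ae hf.ae_eq_mk,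
    eLpNorm_congr_ae hg.ae_eq_mk, mul_assoc, ← eLpNorm_enorm (hf.mk f),
    ← eLpNorm_enorm (hg.mk g)]
  set f' := hf.mk f
  set g' := hg.mk g
  have pointwise (t : G) :
      ‖(f' ⋆[L, μ] g') t‖ₑ ≤ ‖L‖₊ * ‖∫⁻ s, ‖f' s‖ₑ * ‖g' (t - s)‖ₑ ∂μ‖ₑ := by
    rw [convolution_def, enorm_eq_self, ← lintegral_const_mul' _ _ coe_ne_top]
    refine (enorm_integral_le_lintegral_enorm _).trans (lintegral_mono fun s => ?_)
    rw [← mul_assoc]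
    exact L.le_opENorm₂ _ _
  calc eLpNorm (f' ⋆[L, μ] g') (ENNReal.ofReal r) μ
      ≤ ‖L‖₊ * eLpNorm (fun t => ∫⁻ s, ‖f' s‖ₑ * ‖g' (t - s)‖ₑ ∂μ) (ENNReal.ofReal r) μ :=
        eLpNorm_le_nnreal_smul_eLpNorm_of_ae_le_mul' (ae_of_all _ pointwise) _
    _ ≤ _ := by
        rw [← enorm_eq_nnnorm]
        gcongr
        exact eLpNorm_lintegral_convolution_le (μ := μ) hf.stronglyMeasurable_mk.enorm
          hg.stronglyMeasurable_mk.enorm hp hq hr hpqr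

theorem MemLp.convolution {f : G → E} {g : G → E'} {p q r : ℝ} (hf : MemLp f (ENNReal.ofReal p) μ)
    (hg : MemLp g (ENNReal.ofReal q) μ) (hp : 1 ≤ p) (hq : 1 ≤ q) (hr : 0 < r)
    (hpqr : 1 / p + 1 / q = 1 + 1 / r) : MemLp (f ⋆[L, μ] g) (ENNReal.ofReal r) μ :=
  ⟨(hf.1.convolution_integrand L hg.1).integral_prod_right',
    (eLpNorm_convolution_le L hf.1 hg.1 hp hq hr hpqr).trans_lt
      (mul_lt_top (mul_lt_top enorm_lt_top hf.2) hg.2)⟩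

end Young

section Kernel

theorem lintegral_comp_abs (F : ℝ → ℝ≥0∞) : ∫⁻ r, F |r| = 2 * ∫⁻ r in Ioi 0, F r := by
  have hneg := (Measure.measurePreserving_neg (volume : Measure ℝ)).setLIntegral_comp_preimage_emb
    (Homeomorph.neg ℝ).measurableEmbedding (fun r => F |r|) (Ioi 0)
  simp only [Set.neg_preimage, Set.neg_Ioi, neg_zero, abs_neg] at hneg
  have hpos : ∫⁻ r in Ioi 0, F |r| = ∫⁻ r in Ioi 0, F r :=
    setLIntegral_congr_fun measurableSet_Ioi fun r hr => by rw [abs_of_pos hr]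
  rw [← lintegral_add_compl _ measurableSet_Iio, compl_Iio, ← setLIntegral_congr Ioi_ae_eq_Ici,
    hneg, hpos, two_mul]

theorem lintegral_Ioc_zero_one_rpow {s : ℝ} (hs : -1 < s) :
    ∫⁻ x in Ioc 0 1, ENNReal.ofReal (x ^ s) = ENNReal.ofReal (1 / (s + 1)) := by
  have hint : IntervalIntegrable (fun x : ℝ => x ^ s) volume 0 1 :=
    intervalIntegral.intervalIntegrable_rpow' hs
  rw [← ofReal_integral_eq_lintegral_ofReal
    ((intervalIntegrable_iff_integrableOn_Ioc_of_le zero_le_one).mp hint)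
    ((ae_restrict_iff' measurableSet_Ioc).mpr (ae_of_all _ fun x hx => rpow_nonneg hx.1.le s)),
    ← intervalIntegral.integral_of_le zero_le_one, integral_rpow (Or.inl hs), Real.one_rpow,
    zero_rpow (by linarith), sub_zero]

theorem lintegral_Ioi_rpow_of_lt {s : ℝ} (hs : s < -1) {c : ℝ} (hc : 0 < c) :
    ∫⁻ x in Ioi c, ENNReal.ofReal (x ^ s) = ENNReal.ofReal (-c ^ (s + 1) / (s + 1)) := by
  rw [← integral_Ioi_rpow_of_lt hs hc, ofReal_integral_eq_lintegral_ofReal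
    (integrableOn_Ioi_rpow_of_lt hs hc)
    ((ae_restrict_iff' measurableSet_Ioi).mpr
      (ae_of_all _ fun x hx => rpow_nonneg (hc.trans hx).le s))]

theorem lintegral_Ioi_exp_mul {a : ℝ} (ha : a < 0) (c : ℝ) :
    ∫⁻ x in Ioi c, ENNReal.ofReal (exp (a * x)) = ENNReal.ofReal (-exp (a * c) / a) := by
  rw [← integral_exp_mul_Ioi ha c, ofReal_integral_eq_lintegral_ofReal
    (integrableOn_exp_mul_Ioi ha c) (ae_of_all _ fun x => (exp_pos _).le)]

theorem ENNReal.ofReal_rpow_le_of_le {x y a : ℝ} (hxy : x ≤ y) (ha : 0 ≤ a) :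
    ENNReal.ofReal x ^ a ≤ ENNReal.ofReal (y ^ a) := by
  rcases le_or_gt 0 y with hy | hy
  · exact (ENNReal.rpow_le_rpow (ENNReal.ofReal_le_ofReal hxy) ha).trans_eq
      (ofReal_rpow_of_nonneg hy ha)
  rcases ha.eq_or_lt with rfl | ha
  · simp
  rw [ENNReal.ofReal_of_nonpos (by linarith), ENNReal.zero_rpow_of_pos ha]
  exact bot_le

variable {lam a : ℝ}

theorem mul_one_add_mul_rpow_neg_half_rpow_le (hlam : 0 ≤ lam) {r : ℝ} (hr : 0 ≤ r)
    (ha : 0 ≤ a) : (lam * (1 + lam * r) ^ (-(1 : ℝ) / 2)) ^ a ≤ lam ^ a := by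
  gcongr
  exact mul_le_of_le_one_right hlam
    (rpow_le_one_of_one_le_of_nonpos (by nlinarith) (by norm_num))

theorem mul_one_add_mul_rpow_neg_half_rpow_le_rpow_mul (hlam : 0 < lam) {r : ℝ} (hr : 0 < r)
    (ha : 0 ≤ a) :
    (lam * (1 + lam * r) ^ (-(1 : ℝ) / 2)) ^ a ≤ lam ^ (a / 2) * r ^ (-(a / 2)) := by
  calc (lam * (1 + lam * r) ^ (-(1 : ℝ) / 2)) ^ a
      ≤ (lam * (lam * r) ^ (-(1 : ℝ) / 2)) ^ a := by
        refine rpow_le_rpow (by positivity) (mul_le_mul_of_nonneg_left ?_ hlam.le) ha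
        exact rpow_le_rpow_of_nonpos (mul_pos hlam hr) (by linarith) (by norm_num)
    _ = lam ^ (a / 2) * r ^ (-(a / 2)) := by
        rw [mul_rpow hlam.le hr.le, ← mul_assoc, ← rpow_one_add' hlam.le (by norm_num),
          mul_rpow (by positivity) (by positivity), ← rpow_mul hlam.le, ← rpow_mul hr.le]
        ring_nf

theorem ofReal_rpow_le_of_le_mul_one_add_mul_rpow_neg_half {x r : ℝ}
    (hx : x ≤ lam * (1 + lam * r) ^ (-(1 : ℝ) / 2)) (hlam : 0 < lam) (hr : 0 < r) (ha : 0 ≤ a) :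
    ENNReal.ofReal x ^ a ≤ ENNReal.ofReal (lam ^ (a / 2)) * ENNReal.ofReal (r ^ (-(a / 2))) := by
  rw [← ENNReal.ofReal_mul (by positivity)]
  exact (ENNReal.ofReal_rpow_le_of_le hx ha).trans
    (ENNReal.ofReal_le_ofReal (mul_one_add_mul_rpow_neg_half_rpow_le_rpow_mul hlam hr ha))

variable {p : ℝ → ℝ}

theorem lintegral_Ici_one_ofReal_rpow_le (hlam : 0 ≤ lam) (ha : 0 < a)
    (hfar : ∀ r, 1 ≤ r → p r ≤ lam ^ ((1 : ℝ) / 2) * exp (-r / 2)) :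
    ∫⁻ r in Ici 1, ENNReal.ofReal (p r) ^ a ≤ ENNReal.ofReal (2 / a * lam ^ (a / 2)) := by
  have pointwise : ∀ r ∈ Ici (1 : ℝ), ENNReal.ofReal (p r) ^ a ≤
      ENNReal.ofReal (lam ^ (a / 2)) * ENNReal.ofReal (exp (-(a / 2) * r)) := by
    intro r hr
    rw [← ENNReal.ofReal_mul (by positivity)]
    refine (ENNReal.ofReal_rpow_le_of_le (hfar r hr) ha.le).trans_eq ?_
    rw [mul_rpow (by positivity) (exp_pos _).le, ← rpow_mul hlam, ← exp_mul]
    ring_nf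
  calc ∫⁻ r in Ici 1, ENNReal.ofReal (p r) ^ a
      ≤ ∫⁻ r in Ici 1, ENNReal.ofReal (lam ^ (a / 2)) * ENNReal.ofReal (exp (-(a / 2) * r)) :=
        setLIntegral_mono' measurableSet_Ici pointwise
    _ ≤ ∫⁻ r in Ioi 0, ENNReal.ofReal (lam ^ (a / 2)) * ENNReal.ofReal (exp (-(a / 2) * r)) :=
        lintegral_mono_set (Ici_subset_Ioi.mpr one_pos)
    _ = ENNReal.ofReal (2 / a * lam ^ (a / 2)) := by
        rw [lintegral_const_mul' _ _ ofReal_ne_top, lintegral_Ioi_exp_mul (by linarith),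
          ← ENNReal.ofReal_mul (by positivity)]
        rw [mul_zero, exp_zero]
        congr 1
        field_simp

theorem lintegral_Ioo_zero_one_ofReal_rpow_le_of_lt_two (hlam : 0 < lam) (ha₀ : 0 ≤ a)
    (ha : a < 2) (hnear : ∀ r ∈ Ioo (0 : ℝ) 1, p r ≤ lam * (1 + lam * r) ^ (-(1 : ℝ) / 2)) :
    ∫⁻ r in Ioo 0 1, ENNReal.ofReal (p r) ^ a ≤
      ENNReal.ofReal (1 / (1 - a / 2) * lam ^ (a / 2)) := by
  calc ∫⁻ r in Ioo 0 1, ENNReal.ofReal (p r) ^ a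
      ≤ ∫⁻ r in Ioo 0 1, ENNReal.ofReal (lam ^ (a / 2)) * ENNReal.ofReal (r ^ (-(a / 2))) :=
        setLIntegral_mono' measurableSet_Ioo fun r hr =>
          ofReal_rpow_le_of_le_mul_one_add_mul_rpow_neg_half (hnear r hr) hlam hr.1 ha₀
    _ ≤ ∫⁻ r in Ioc 0 1, ENNReal.ofReal (lam ^ (a / 2)) * ENNReal.ofReal (r ^ (-(a / 2))) :=
        lintegral_mono_set Ioo_subset_Ioc_self
    _ = ENNReal.ofReal (1 / (1 - a / 2) * lam ^ (a / 2)) := by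
        rw [lintegral_const_mul' _ _ ofReal_ne_top, lintegral_Ioc_zero_one_rpow (by linarith),
          ← ENNReal.ofReal_mul (by positivity), mul_comm, neg_add_eq_sub]

theorem lintegral_Ioo_zero_one_ofReal_rpow_le_of_two_lt (hlam : 1 ≤ lam) (ha : 2 < a)
    (hnear : ∀ r ∈ Ioo (0 : ℝ) 1, p r ≤ lam * (1 + lam * r) ^ (-(1 : ℝ) / 2)) :
    ∫⁻ r in Ioo 0 1, ENNReal.ofReal (p r) ^ a ≤
      ENNReal.ofReal ((1 + 1 / (a / 2 - 1)) * lam ^ (a - 1)) := by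
  have hlam₀ : 0 < lam := by linarith
  have hinv : lam⁻¹ ≤ 1 := inv_le_one_of_one_le₀ hlam
  have short : ∫⁻ r in Ioo 0 lam⁻¹, ENNReal.ofReal (p r) ^ a ≤ ENNReal.ofReal (lam ^ (a - 1)) := by
    calc ∫⁻ r in Ioo 0 lam⁻¹, ENNReal.ofReal (p r) ^ a
        ≤ ∫⁻ r in Ioo 0 lam⁻¹, ENNReal.ofReal (lam ^ a) :=
          setLIntegral_mono' measurableSet_Ioo fun r hr =>
            (ENNReal.ofReal_rpow_le_of_le (hnear r ⟨hr.1, hr.2.trans_le hinv⟩)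
              (by linarith)).trans
              (ENNReal.ofReal_le_ofReal (mul_one_add_mul_rpow_neg_half_rpow_le hlam₀.le hr.1.le
                (by linarith)))
      _ = ENNReal.ofReal (lam ^ (a - 1)) := by
          rw [setLIntegral_const, Real.volume_Ioo, sub_zero, ← ENNReal.ofReal_mul (by positivity),
            rpow_sub_one hlam₀.ne', div_eq_mul_inv]
  have long : ∫⁻ r in Ico lam⁻¹ 1, ENNReal.ofReal (p r) ^ a ≤
      ENNReal.ofReal (1 / (a / 2 - 1) * lam ^ (a - 1)) := by
    calc ∫⁻ r in Ico lam⁻¹ 1, ENNReal.ofReal (p r) ^ a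
        ≤ ∫⁻ r in Ico lam⁻¹ 1, ENNReal.ofReal (lam ^ (a / 2)) * ENNReal.ofReal (r ^ (-(a / 2))) :=
          setLIntegral_mono' measurableSet_Ico fun r hr =>
            have hr₀ : 0 < r := (inv_pos.mpr hlam₀).trans_le hr.1
            ofReal_rpow_le_of_le_mul_one_add_mul_rpow_neg_half (hnear r ⟨hr₀, hr.2⟩) hlam₀ hr₀
              (by linarith)
      _ ≤ ∫⁻ r in Ioi lam⁻¹, ENNReal.ofReal (lam ^ (a / 2)) * ENNReal.ofReal (r ^ (-(a / 2))) :=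
          lintegral_mono_set' (Ico_subset_Ici_self.eventuallyLE.trans Ioi_ae_eq_Ici.symm.le)
      _ = ENNReal.ofReal (1 / (a / 2 - 1) * lam ^ (a - 1)) := by
          rw [lintegral_const_mul' _ _ ofReal_ne_top,
            lintegral_Ioi_rpow_of_lt (by linarith) (inv_pos.mpr hlam₀),
            ← ENNReal.ofReal_mul (by positivity)]
          congr 1
          rw [inv_rpow hlam₀.le, ← rpow_neg hlam₀.le, show -(-(a / 2) + 1) = a / 2 - 1 by ring,
            show -(a / 2) + 1 = -(a / 2 - 1) by ring, neg_div_neg_eq, mul_div_assoc',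
            ← rpow_add hlam₀, show a / 2 + (a / 2 - 1) = a - 1 by ring]
          ring
  calc ∫⁻ r in Ioo 0 1, ENNReal.ofReal (p r) ^ a
      ≤ ∫⁻ r in Ioo 0 lam⁻¹ ∪ Ico lam⁻¹ 1, ENNReal.ofReal (p r) ^ a :=
        lintegral_mono_set fun r hr => (lt_or_ge r lam⁻¹).imp (fun h => ⟨hr.1, h⟩)
          (fun h => ⟨h, hr.2⟩)
    _ ≤ (∫⁻ r in Ioo 0 lam⁻¹, ENNReal.ofReal (p r) ^ a) +
          ∫⁻ r in Ico lam⁻¹ 1, ENNReal.ofReal (p r) ^ a :=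
        lintegral_union_le _ _ _
    _ ≤ ENNReal.ofReal (lam ^ (a - 1)) + ENNReal.ofReal (1 / (a / 2 - 1) * lam ^ (a - 1)) :=
        add_le_add short long
    _ = ENNReal.ofReal ((1 + 1 / (a / 2 - 1)) * lam ^ (a - 1)) := by
        rw [← ENNReal.ofReal_add (by positivity)
          (mul_nonneg (one_div_nonneg.mpr (by linarith)) (by positivity))]
        ring_nf

theorem lintegral_ofReal_rpow_comp_abs_le (ha : 0 < a) (ha₂ : a ≠ 2) :
    ∃ K, 0 < K ∧ ∀ lam, 1 ≤ lam → ∀ p : ℝ → ℝ,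
      (∀ r : ℝ, |r| < 1 → p r ≤ lam * (1 + lam * |r|) ^ (-(1 : ℝ) / 2)) →
      (∀ r : ℝ, 1 ≤ |r| → p r ≤ lam ^ ((1 : ℝ) / 2) * exp (-|r| / 2)) →
      ∫⁻ r, ENNReal.ofReal (p |r|) ^ a ≤
        ENNReal.ofReal (K * lam ^ (if a < 2 then a / 2 else a - 1)) := by
  obtain ⟨K, hK, near_le⟩ : ∃ K, 0 < K ∧ ∀ lam, 1 ≤ lam → ∀ p : ℝ → ℝ,
      (∀ r ∈ Ioo (0 : ℝ) 1, p r ≤ lam * (1 + lam * r) ^ (-(1 : ℝ) / 2)) →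
      ∫⁻ r in Ioo 0 1, ENNReal.ofReal (p r) ^ a ≤
        ENNReal.ofReal (K * lam ^ (if a < 2 then a / 2 else a - 1)) := by
    rcases ha₂.lt_or_gt with h | h
    · refine ⟨1 / (1 - a / 2), one_div_pos.mpr (by linarith), fun lam hlam p hnear => ?_⟩
      rw [if_pos h]
      exact lintegral_Ioo_zero_one_ofReal_rpow_le_of_lt_two (by linarith) ha.le h hnear
    · have : 0 < a / 2 - 1 := by linarith
      refine ⟨1 + 1 / (a / 2 - 1), by positivity, fun lam hlam p hnear => ?_⟩
      rw [if_neg h.not_gt]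
      exact lintegral_Ioo_zero_one_ofReal_rpow_le_of_two_lt hlam h hnear
  refine ⟨2 * (K + 2 / a), by positivity, fun lam hlam p hnear hfar => ?_⟩
  have hE : a / 2 ≤ if a < 2 then a / 2 else a - 1 := by split_ifs <;> linarith
  have near := near_le lam hlam p fun r hr => by
    simpa [abs_of_pos hr.1] using hnear r (by rw [abs_of_pos hr.1]; exact hr.2)
  have far := lintegral_Ici_one_ofReal_rpow_le (lam := lam) (p := p) (by linarith) ha fun r hr => by
    have hr₀ : 0 < r := one_pos.trans_le hr
    simpa [abs_of_pos hr₀] using hfar r (by rwa [abs_of_pos hr₀])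
  rw [lintegral_comp_abs (fun r => ENNReal.ofReal (p r) ^ a), ← Ioo_union_Ici_eq_Ioi zero_lt_one,
    lintegral_union measurableSet_Ici ((Iio_disjoint_Ici le_rfl).mono_left Ioo_subset_Iio_self)]
  calc 2 * ((∫⁻ r in Ioo 0 1, ENNReal.ofReal (p r) ^ a) +
        ∫⁻ r in Ici 1, ENNReal.ofReal (p r) ^ a)
      ≤ 2 * (ENNReal.ofReal (K * lam ^ (if a < 2 then a / 2 else a - 1)) +
          ENNReal.ofReal (2 / a * lam ^ (a / 2))) := by
        gcongr
    _ ≤ 2 * (ENNReal.ofReal (K * lam ^ (if a < 2 then a / 2 else a - 1)) +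
          ENNReal.ofReal (2 / a * lam ^ (if a < 2 then a / 2 else a - 1))) := by
        gcongr
    _ = ENNReal.ofReal (2 * (K + 2 / a) * lam ^ (if a < 2 then a / 2 else a - 1)) := by
        rw [← ENNReal.ofReal_add (by positivity) (by positivity),
          ← ENNReal.ofReal_ofNat 2, ← ENNReal.ofReal_mul (by norm_num)]
        ring_nf

theorem eLpNorm_comp_abs_le (ha : 0 < a) (ha₂ : a ≠ 2) :
    ∃ C, 0 < C ∧ ∀ lam, 1 ≤ lam → ∀ p : ℝ → ℝ, (∀ r, 0 ≤ p r) →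
      (∀ r : ℝ, |r| < 1 → p r ≤ lam * (1 + lam * |r|) ^ (-(1 : ℝ) / 2)) →
      (∀ r : ℝ, 1 ≤ |r| → p r ≤ lam ^ ((1 : ℝ) / 2) * exp (-|r| / 2)) →
      eLpNorm (fun r => p |r|) (ENNReal.ofReal a) volume ≤
        ENNReal.ofReal (C * lam ^ ((if a < 2 then a / 2 else a - 1) / a)) := by
  obtain ⟨K, hK, bound⟩ := lintegral_ofReal_rpow_comp_abs_le ha ha₂
  refine ⟨K ^ (1 / a), by positivity, fun lam hlam p hp₀ hnear hfar => ?_⟩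
  rw [eLpNorm_eq_lintegral_rpow_enorm_toReal (by simpa using ha) ofReal_ne_top,
    toReal_ofReal ha.le]
  simp_rw [Real.enorm_of_nonneg (hp₀ _)]
  calc (∫⁻ r, ENNReal.ofReal (p |r|) ^ a) ^ (1 / a)
      ≤ ENNReal.ofReal (K * lam ^ (if a < 2 then a / 2 else a - 1)) ^ (1 / a) :=
        ENNReal.rpow_le_rpow (bound lam hlam p hnear hfar) (by positivity)
    _ = ENNReal.ofReal (K ^ (1 / a) * lam ^ ((if a < 2 then a / 2 else a - 1) / a)) := by
        rw [ofReal_rpow_of_nonneg (by positivity) (by positivity),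
          mul_rpow hK.le (by positivity), ← rpow_mul (by linarith), mul_one_div]

end Kernel

/-- `L^{q'} → L^q` bound for the integral operator with kernel `p(|t-s|)`. -/
theorem stmt_1 (q : ℝ) (hq2 : 2 ≤ q) (hq4 : q ≠ 4) :
    ∃ C : ℝ, 0 < C ∧ ∀ lam : ℝ, 1 ≤ lam →
      ∀ p : ℝ → ℝ, Measurable p → (∀ r, 0 ≤ p r) →
        (∀ r : ℝ, |r| < 1 → p r ≤ lam * (1 + lam * |r|) ^ (-(1:ℝ)/2)) →
        (∀ r : ℝ, 1 ≤ |r| → p r ≤ lam ^ ((1:ℝ)/2) * Real.exp (-|r| / 2)) →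
        ∀ h : ℝ → ℝ, MemLp h (ENNReal.ofReal (q / (q - 1))) volume →
          MemLp (fun t : ℝ => ∫ s : ℝ, p |t - s| * h s) (ENNReal.ofReal q) volume ∧
          eLpNorm (fun t : ℝ => ∫ s : ℝ, p |t - s| * h s) (ENNReal.ofReal q) volume ≤
            ENNReal.ofReal (C * lam ^ (2 * (if q < 4 then (1:ℝ)/4 else 1/2 - 1/q))) *
              eLpNorm h (ENNReal.ofReal (q / (q - 1))) volume := by
  have hq : 0 < q := by linarith
  have hdual : 1 ≤ q / (q - 1) := by rw [le_div_iff₀ (by linarith)]; linarith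
  have hhalf : 1 ≤ q / 2 := by linarith
  have young : 1 / (q / (q - 1)) + 1 / (q / 2) = 1 + 1 / q := by field_simp; ring
  have exponent : (if q / 2 < 2 then q / 2 / 2 else q / 2 - 1) / (q / 2) =
      2 * (if q < 4 then (1 : ℝ) / 4 else 1 / 2 - 1 / q) := by
    by_cases h : q < 4
    · rw [if_pos (by linarith), if_pos h]; field_simp; ring
    · rw [if_neg (by linarith), if_neg h]; field_simp
  obtain ⟨C, hC, kernel_le⟩ := eLpNorm_comp_abs_le (a := q / 2) (by positivity)
    (by contrapose! hq4; linarith)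
  refine ⟨C, hC, fun lam hlam p hp hp₀ hnear hfar h hh => ?_⟩
  have hk := exponent ▸ kernel_le lam hlam p hp₀ hnear hfar
  have hkLp : MemLp (fun r => p |r|) (ENNReal.ofReal (q / 2)) volume :=
    ⟨(hp.comp measurable_abs).aestronglyMeasurable, hk.trans_lt ofReal_lt_top⟩
  have hconv : (fun t => ∫ s, p |t - s| * h s) =
      h ⋆[ContinuousLinearMap.mul ℝ ℝ, volume] fun r => p |r| := by
    ext t
    simp_rw [convolution_mul, mul_comm]
  rw [hconv]
  refine ⟨MemLp.convolution _ hh hkLp hdual hhalf hq young,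
    (eLpNorm_convolution_le _ hh.1 hkLp.1 hdual hhalf hq young).trans ?_⟩
  rw [← ofReal_norm, ContinuousLinearMap.opNorm_mul, ENNReal.ofReal_one, one_mul, mul_comm]
  gcongr
end

section
/- Let β : ℝ → ℝ be a smooth function supported in the interval (1/2, 2). For every natural number N there is a constant C (depending only on β and N) such that for all real λ ≥ 1, all η ∈ (0, 1], all integers j, and all real τ ≥ 0, |∫_0^∞ β(2^(−j) t) e^(i t λ) e^(−t η) cos(t τ) dt| ≤ C · 2^j · (1 + 2^j |τ − λ|)^(−N). -/
open MeasureTheory Real Complex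

-- derivative of t ↦ exp(I z t)
lemma hasDerivAt_expIzt (z : ℂ) (t : ℝ) :
    HasDerivAt (fun t : ℝ ↦ Complex.exp (Complex.I * z * t))
      (Complex.I * z * Complex.exp (Complex.I * z * t)) t := by
  have h1 : HasDerivAt (fun t : ℝ ↦ Complex.I * z * (t : ℂ)) (Complex.I * z) t := by
    simpa using (Complex.ofRealCLM.hasDerivAt (x := t)).const_mul (Complex.I * z)
  simpa [mul_comm, Function.comp_def] using (Complex.hasDerivAt_exp (Complex.I * z * t)).comp t h1

lemma norm_expIzt_le (z : ℂ) (hz : 0 ≤ z.im) (t : ℝ) (ht : 0 ≤ t) :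
    ‖Complex.exp (Complex.I * z * t)‖ ≤ 1 := by
  have : (Complex.I * z * (t : ℂ)).re = -z.im * t := by
    simp [Complex.mul_re]
  rw [Complex.norm_exp, this]
  exact Real.exp_le_one_iff.2 (by nlinarith)

lemma ibp_step (f : ℝ → ℂ) (hf : ContDiff ℝ (⊤ : ℕ∞) f) (hc : HasCompactSupport f)
    (z : ℂ) (hz : z ≠ 0) :
    ∫ t : ℝ, f t * Complex.exp (Complex.I * z * t) =
      -(Complex.I * z)⁻¹ * ∫ t : ℝ, deriv f t * Complex.exp (Complex.I * z * t) := by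
  have hIz : Complex.I * z ≠ 0 := mul_ne_zero Complex.I_ne_zero hz
  have hfd : ∀ t : ℝ, HasDerivAt f (deriv f t) t :=
    fun t ↦ (hf.differentiable (by simp) t).hasDerivAt
  have hcont : Continuous fun t : ℝ ↦ Complex.exp (Complex.I * z * t) := by
    fun_prop
  have hdc : Continuous (deriv f) := (contDiff_infty_iff_deriv.1 hf).2.continuous
  have h1 : Integrable (f * fun t : ℝ ↦ Complex.I * z * Complex.exp (Complex.I * z * t)) :=
    ((hf.continuous.mul (by fun_prop)) ).integrable_of_hasCompactSupport (hc.mul_right)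
  have h2 : Integrable (deriv f * fun t : ℝ ↦ Complex.exp (Complex.I * z * t)) :=
    ((hdc.mul hcont)).integrable_of_hasCompactSupport (hc.deriv.mul_right)
  have h3 : Integrable (f * fun t : ℝ ↦ Complex.exp (Complex.I * z * t)) :=
    ((hf.continuous.mul hcont)).integrable_of_hasCompactSupport (hc.mul_right)
  have := MeasureTheory.integral_mul_deriv_eq_deriv_mul_of_integrable
    (u := f) (v := fun t : ℝ ↦ Complex.exp (Complex.I * z * t))
    (u' := deriv f) (v' := fun t : ℝ ↦ Complex.I * z * Complex.exp (Complex.I * z * t))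
    (fun t _ ↦ hfd t) (fun t _ ↦ hasDerivAt_expIzt z t) h1 h2 h3
  -- this : ∫ t, f t * (I z exp) = - ∫ t, deriv f t * exp
  have h4 : (∫ t : ℝ, f t * (Complex.I * z * Complex.exp (Complex.I * z * t)))
      = Complex.I * z * ∫ t : ℝ, f t * Complex.exp (Complex.I * z * t) := by
    rw [← MeasureTheory.integral_const_mul]
    congr 1; ext t; ring
  rw [h4] at this
  field_simp
  simpa [mul_comm] using this

lemma hcs_iteratedDeriv (g : ℝ → ℂ) (hc : HasCompactSupport g) (n : ℕ) :
    HasCompactSupport (iteratedDeriv n g) := by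
  induction n with
  | zero => simpa using hc
  | succ n ih => rw [iteratedDeriv_succ]; exact ih.deriv

lemma osc_bound : ∀ (n : ℕ) (f : ℝ → ℂ), ContDiff ℝ (⊤ : ℕ∞) f → HasCompactSupport f →
    ∀ ε : ℝ, 0 < ε → (∀ t < ε, f t = 0) → ∀ z : ℂ, z ≠ 0 → 0 ≤ z.im →
    ‖∫ t : ℝ, f t * Complex.exp (Complex.I * z * t)‖ ≤
      (‖z‖⁻¹) ^ n * ∫ t : ℝ, ‖iteratedDeriv n f t‖ := by
  intro n
  induction n with
  | zero =>
    intro f hf hc ε hε h0 z hz him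
    simp only [pow_zero, one_mul, iteratedDeriv_zero]
    have hcont : Continuous fun t : ℝ ↦ Complex.exp (Complex.I * z * t) := by fun_prop
    refine le_trans (norm_integral_le_integral_norm _) (integral_mono ?_ ?_ ?_)
    · exact ((hf.continuous.mul hcont).norm).integrable_of_hasCompactSupport
        (hc.mul_right.norm)
    · exact (hf.continuous.norm).integrable_of_hasCompactSupport hc.norm
    · intro t
      by_cases ht : f t = 0
      · simp [ht]
      · have htpos : 0 ≤ t := by
          by_contra h
          exact ht (h0 t (by linarith))
        show ‖f t * Complex.exp (Complex.I * z * t)‖ ≤ ‖f t‖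
        rw [norm_mul]
        calc ‖f t‖ * ‖Complex.exp (Complex.I * z * t)‖ ≤ ‖f t‖ * 1 :=
              mul_le_mul_of_nonneg_left (norm_expIzt_le z him t htpos) (norm_nonneg _)
          _ = ‖f t‖ := mul_one _
  | succ n ih =>
    intro f hf hc ε hε h0 z hz him
    have hderiv0 : ∀ t < ε, deriv f t = 0 := by
      intro t ht
      have hev : f =ᶠ[nhds t] (fun _ ↦ (0 : ℂ)) := by
        filter_upwards [Iio_mem_nhds ht] with s hs using h0 s hs
      rw [hev.deriv_eq]; simp
    have hfd : ContDiff ℝ (⊤ : ℕ∞) (deriv f) := (contDiff_infty_iff_deriv.1 hf).2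
    rw [ibp_step f hf hc z hz]
    rw [norm_mul]
    have hnorm : ‖-(Complex.I * z)⁻¹‖ = ‖z‖⁻¹ := by
      rw [norm_neg, norm_inv, norm_mul, Complex.norm_I, one_mul]
    rw [hnorm]
    calc ‖z‖⁻¹ * ‖∫ t : ℝ, deriv f t * Complex.exp (Complex.I * z * t)‖
        ≤ ‖z‖⁻¹ * ((‖z‖⁻¹) ^ n * ∫ t : ℝ, ‖iteratedDeriv n (deriv f) t‖) :=
          mul_le_mul_of_nonneg_left
            (ih (deriv f) hfd hc.deriv ε hε hderiv0 z hz him) (by positivity)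
      _ = (‖z‖⁻¹) ^ (n + 1) * ∫ t : ℝ, ‖iteratedDeriv (n + 1) f t‖ := by
          rw [iteratedDeriv_succ']; ring

lemma iteratedDeriv_scale (g : ℝ → ℂ) (hg : ContDiff ℝ (⊤ : ℕ∞) g) (c : ℝ) :
    ∀ (n : ℕ) (t : ℝ), iteratedDeriv n (fun s : ℝ ↦ g (c * s)) t
      = (c : ℂ) ^ n * iteratedDeriv n g (c * t) := by
  intro n
  induction n with
  | zero => intro t; simp
  | succ n ih =>
    intro t
    rw [iteratedDeriv_succ]
    have hfun : (iteratedDeriv n fun s : ℝ ↦ g (c * s))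
        = fun s : ℝ ↦ (c : ℂ) ^ n * iteratedDeriv n g (c * s) := funext ih
    have hdiff : Differentiable ℝ (iteratedDeriv n g) :=
      hg.differentiable_iteratedDeriv n (by exact_mod_cast ENat.coe_lt_top n)
    have hinner : HasDerivAt (fun s : ℝ ↦ c * s) c t := by
      simpa using (hasDerivAt_id t).const_mul c
    have houter : HasDerivAt (iteratedDeriv n g) (iteratedDeriv (n + 1) g (c * t)) (c * t) := by
      rw [iteratedDeriv_succ]
      exact (hdiff (c * t)).hasDerivAt
    have hcomp : HasDerivAt (fun s : ℝ ↦ iteratedDeriv n g (c * s))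
        (c • iteratedDeriv (n + 1) g (c * t)) t := houter.scomp t hinner
    have : HasDerivAt (fun s : ℝ ↦ (c : ℂ) ^ n * iteratedDeriv n g (c * s))
        ((c : ℂ) ^ n * (c • iteratedDeriv (n + 1) g (c * t))) t := hcomp.const_mul _
    rw [hfun, this.deriv]
    push_cast
    rw [Complex.real_smul]
    ring

set_option maxHeartbeats 1000000 in
/-- symbol bound for a dyadic piece of the resolvent. -/
theorem stmt_3 (β : ℝ → ℝ) (hβ : ContDiff ℝ (⊤ : ℕ∞) β)
    (hsupp : Function.support β ⊆ Set.Ioo (1/2) 2) (N : ℕ) :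
    ∃ C : ℝ, 0 < C ∧ ∀ lam : ℝ, 1 ≤ lam → ∀ η : ℝ, 0 < η → η ≤ 1 →
      ∀ j : ℤ, ∀ τ : ℝ, 0 ≤ τ →
        ‖∫ t in Set.Ioi (0:ℝ), (β ((2:ℝ) ^ (-j) * t) : ℂ) *
            Complex.exp (Complex.I * (t:ℂ) * (lam:ℂ)) * (Real.exp (-t * η) : ℂ) *
            (Real.cos (t * τ) : ℂ)‖ ≤
          C * (2:ℝ) ^ j * (1 + (2:ℝ) ^ j * |τ - lam|) ^ (-(N:ℝ)) := by
  classical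
  set g : ℝ → ℂ := fun x ↦ (β x : ℂ) with hgdef
  have hgs : ContDiff ℝ (⊤ : ℕ∞) g :=
    (Complex.ofRealCLM.contDiff.comp hβ).of_le (by simp)
  have hgz : ∀ x : ℝ, x ∉ Set.Ioo (1/2 : ℝ) 2 → g x = 0 := by
    intro x hx
    have : β x = 0 := by
      by_contra h
      exact hx (hsupp h)
    simp [hgdef, this]
  have hgc : HasCompactSupport g :=
    HasCompactSupport.intro (isCompact_Icc (a := (1/2 : ℝ)) (b := 2))
      (fun x hx ↦ hgz x (fun h ↦ hx ⟨h.1.le, h.2.le⟩))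
  set M : ℕ → ℝ := fun n ↦ ∫ t : ℝ, ‖iteratedDeriv n g t‖ with hMdef
  have hMnonneg : ∀ n, 0 ≤ M n := fun n ↦ integral_nonneg (fun t ↦ norm_nonneg _)
  refine ⟨2 ^ N * (M 0 + M N) + 1, by
    have h9 := mul_nonneg (pow_nonneg (by norm_num : (0:ℝ) ≤ 2) N) (add_nonneg (hMnonneg 0) (hMnonneg N))
    linarith, ?_⟩
  intro lam hlam η hη hη1 j τ hτ
  set s : ℝ := (2:ℝ) ^ j with hsdef
  set c : ℝ := (2:ℝ) ^ (-j) with hcdef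
  have hs : 0 < s := zpow_pos (by norm_num) j
  have hc : 0 < c := zpow_pos (by norm_num) (-j)
  have hcs : c * s = 1 := by
    rw [hcdef, hsdef, ← zpow_add₀ (by norm_num : (2:ℝ) ≠ 0)]
    simp
  have hcinv : c⁻¹ = s := inv_eq_of_mul_eq_one_right hcs
  have hceq : c = s⁻¹ := by rw [← hcinv, inv_inv]
  set f : ℝ → ℂ := fun t ↦ g (c * t) with hfdef
  have hfs : ContDiff ℝ (⊤ : ℕ∞) f := hgs.comp (contDiff_const.mul contDiff_id)
  have hmem : ∀ t : ℝ, f t ≠ 0 → c * t ∈ Set.Ioo (1/2 : ℝ) 2 := by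
    intro t ht
    by_contra h
    exact ht (hgz _ h)
  have hfc : HasCompactSupport f := by
    apply HasCompactSupport.intro (isCompact_Icc (a := s/2) (b := 2*s))
    intro x hx
    by_contra h
    obtain ⟨h1, h2⟩ := hmem x h
    apply hx
    constructor
    · nlinarith
    · nlinarith
  have hε : (0:ℝ) < s / 2 := by linarith
  have h0 : ∀ t < s / 2, f t = 0 := by
    intro t ht
    apply hgz
    intro hmem'
    have : c * t < 1/2 := by nlinarith
    linarith [hmem'.1]
  -- integral of norm of iterated derivative of f
  have hMint : ∀ n : ℕ, (∫ t : ℝ, ‖iteratedDeriv n f t‖) = c ^ n * (s * M n) := by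
    intro n
    have h1 : ∀ t : ℝ, ‖iteratedDeriv n f t‖ = c ^ n * ‖iteratedDeriv n g (c * t)‖ := by
      intro t
      rw [iteratedDeriv_scale g hgs c n t, norm_mul, norm_pow, Complex.norm_real,
        Real.norm_eq_abs, abs_of_pos hc]
    calc (∫ t : ℝ, ‖iteratedDeriv n f t‖)
        = ∫ t : ℝ, c ^ n * ‖iteratedDeriv n g (c * t)‖ := by
          exact integral_congr_ae (Filter.Eventually.of_forall h1)
      _ = c ^ n * ∫ t : ℝ, ‖iteratedDeriv n g (c * t)‖ := integral_const_mul _ _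
      _ = c ^ n * (|c⁻¹| • ∫ t : ℝ, ‖iteratedDeriv n g t‖) := by
          rw [MeasureTheory.Measure.integral_comp_mul_left (fun t ↦ ‖iteratedDeriv n g t‖) c]
      _ = c ^ n * (s * M n) := by
          rw [hcinv, abs_of_pos hs, smul_eq_mul]
  set D : ℝ := s * |τ - lam| with hDdef
  have hD0 : 0 ≤ D := mul_nonneg hs.le (abs_nonneg _)
  have hrpow : (1 + D) ^ (-(N:ℝ)) = ((1 + D) ^ N)⁻¹ := by
    rw [Real.rpow_neg (by linarith), Real.rpow_natCast]
  -- the key bound for each frequency σ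
  have key : ∀ σ : ℝ, |τ - lam| ≤ |σ| →
      ‖∫ t : ℝ, f t * Complex.exp (Complex.I * ((σ:ℂ) + (η:ℂ) * Complex.I) * t)‖ ≤
        2 ^ N * (M 0 + M N) * s * ((1 + D) ^ N)⁻¹ := by
    intro σ hσ
    set z : ℂ := (σ:ℂ) + (η:ℂ) * Complex.I with hzdef
    have hzim : z.im = η := by simp [hzdef]
    have hz0 : z ≠ 0 := by
      intro h
      rw [h] at hzim
      simp at hzim
      linarith
    have hzabs : |σ| ≤ ‖z‖ := by
      have := Complex.abs_re_le_norm z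
      have hre : z.re = σ := by simp [hzdef]
      rwa [hre] at this
    have hpow : 0 < (1 + D) ^ N := by positivity
    rcases le_or_gt D 1 with hD | hD
    · -- use n = 0 bound
      have hb := osc_bound 0 f hfs hfc (s/2) hε h0 z hz0 (by rw [hzim]; exact hη.le)
      rw [hMint 0] at hb
      simp only [pow_zero, one_mul] at hb
      refine le_trans hb ?_
      rw [← div_eq_mul_inv, le_div_iff₀ hpow]
      have h2N : (1 + D) ^ N ≤ 2 ^ N := pow_le_pow_left₀ (by linarith) (by linarith) N
      have h2Npos : (0:ℝ) < 2 ^ N := by positivity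
      calc s * M 0 * (1 + D) ^ N ≤ s * M 0 * 2 ^ N :=
            mul_le_mul_of_nonneg_left h2N (mul_nonneg hs.le (hMnonneg 0))
        _ ≤ 2 ^ N * (M 0 + M N) * s := by nlinarith [mul_nonneg (mul_nonneg h2Npos.le hs.le) (hMnonneg N)]
    · -- use n = N bound
      have hb := osc_bound N f hfs hfc (s/2) hε h0 z hz0 (by rw [hzim]; exact hη.le)
      rw [hMint N] at hb
      have hτlam : 0 < |τ - lam| := by
        by_contra h
        push_neg at h
        have : |τ - lam| = 0 := le_antisymm h (abs_nonneg _)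
        rw [hDdef] at hD
        nlinarith
      have hzpos : 0 < ‖z‖ := lt_of_lt_of_le hτlam (le_trans hσ hzabs)
      have hzinvle : ‖z‖⁻¹ ≤ |τ - lam|⁻¹ :=
        inv_anti₀ hτlam (le_trans hσ hzabs)
      have hstep : (‖z‖⁻¹) ^ N * (c ^ N * (s * M N)) ≤ D⁻¹ ^ N * s * M N := by
        have h1 : (‖z‖⁻¹) ^ N * c ^ N ≤ (|τ - lam|⁻¹) ^ N * c ^ N :=
          mul_le_mul_of_nonneg_right (pow_le_pow_left₀ (inv_nonneg.2 (norm_nonneg z)) hzinvle N) (pow_nonneg hc.le N)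
        have h2 : (|τ - lam|⁻¹) ^ N * c ^ N = D⁻¹ ^ N := by
          rw [← mul_pow]
          congr 1
          rw [hceq, hDdef, mul_inv, mul_comm]
        calc (‖z‖⁻¹) ^ N * (c ^ N * (s * M N)) = ((‖z‖⁻¹) ^ N * c ^ N) * (s * M N) := by ring
          _ ≤ ((|τ - lam|⁻¹) ^ N * c ^ N) * (s * M N) :=
              mul_le_mul_of_nonneg_right h1 (mul_nonneg hs.le (hMnonneg N))
          _ = D⁻¹ ^ N * s * M N := by rw [h2]; ring
      have hDpos : 0 < D := by linarith
      have hfinal : D⁻¹ ^ N * s * M N ≤ 2 ^ N * (M 0 + M N) * s * ((1 + D) ^ N)⁻¹ := by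
        rw [← div_eq_mul_inv (2 ^ N * (M 0 + M N) * s)]
        rw [le_div_iff₀ hpow]
        have h2D : (1 + D) ^ N ≤ 2 ^ N * D ^ N := by
          rw [← mul_pow]
          exact pow_le_pow_left₀ (by linarith) (by linarith) N
        have hDN : D⁻¹ ^ N * D ^ N = 1 := by
          rw [← mul_pow, inv_mul_cancel₀ hDpos.ne', one_pow]
        have h2Npos : (0:ℝ) < 2 ^ N := by positivity
        have hnn : 0 ≤ D⁻¹ ^ N * s * M N :=
          mul_nonneg (mul_nonneg (pow_nonneg (inv_nonneg.2 hD0) N) hs.le) (hMnonneg N)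
        calc D⁻¹ ^ N * s * M N * (1 + D) ^ N ≤ D⁻¹ ^ N * s * M N * (2 ^ N * D ^ N) :=
              mul_le_mul_of_nonneg_left h2D hnn
          _ = (D⁻¹ ^ N * D ^ N) * (s * M N * 2 ^ N) := by ring
          _ = s * M N * 2 ^ N := by rw [hDN]; ring
          _ ≤ 2 ^ N * (M 0 + M N) * s := by
              nlinarith [mul_nonneg (mul_nonneg h2Npos.le hs.le) (hMnonneg 0)]
      exact le_trans hb (le_trans hstep hfinal)
  -- assemble
  set zp : ℂ := ((lam + τ : ℝ) : ℂ) + (η:ℂ) * Complex.I with hzpdef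
  set zm : ℂ := ((lam - τ : ℝ) : ℂ) + (η:ℂ) * Complex.I with hzmdef
  have hioi : (∫ t in Set.Ioi (0:ℝ), (β (c * t) : ℂ) *
      Complex.exp (Complex.I * (t:ℂ) * (lam:ℂ)) * (Real.exp (-t * η) : ℂ) *
      (Real.cos (t * τ) : ℂ)) = ∫ t : ℝ, (β (c * t) : ℂ) *
      Complex.exp (Complex.I * (t:ℂ) * (lam:ℂ)) * (Real.exp (-t * η) : ℂ) *
      (Real.cos (t * τ) : ℂ) := by
    apply setIntegral_eq_integral_of_forall_compl_eq_zero
    intro t ht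
    have ht0 : t ≤ 0 := by simpa using ht
    have hft : f t = 0 := h0 t (by linarith)
    have : (β (c * t) : ℂ) = 0 := hft
    rw [this]
    ring
  have hpt : ∀ t : ℝ, (β (c * t) : ℂ) *
      Complex.exp (Complex.I * (t:ℂ) * (lam:ℂ)) * (Real.exp (-t * η) : ℂ) *
      (Real.cos (t * τ) : ℂ) =
      (2:ℂ)⁻¹ * (f t * Complex.exp (Complex.I * zp * t) +
        f t * Complex.exp (Complex.I * zm * t)) := by
    intro t
    have hcos : (Real.cos (t * τ) : ℂ) =
        (Complex.exp (((t * τ : ℝ) : ℂ) * Complex.I) +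
          Complex.exp (-((t * τ : ℝ) : ℂ) * Complex.I)) / 2 := by
      rw [Complex.ofReal_cos]; rfl
    have hexp : (Real.exp (-t * η) : ℂ) = Complex.exp (((-t * η : ℝ) : ℂ)) :=
      Complex.ofReal_exp _
    have e1 : Complex.exp (Complex.I * (t:ℂ) * (lam:ℂ)) *
        Complex.exp (((-t * η : ℝ) : ℂ)) *
        Complex.exp (((t * τ : ℝ) : ℂ) * Complex.I) =
        Complex.exp (Complex.I * zp * t) := by
      rw [← Complex.exp_add, ← Complex.exp_add]
      congr 1
      rw [hzpdef]
      push_cast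
      linear_combination (-(t:ℂ) * η) * Complex.I_sq
    have e2 : Complex.exp (Complex.I * (t:ℂ) * (lam:ℂ)) *
        Complex.exp (((-t * η : ℝ) : ℂ)) *
        Complex.exp (-((t * τ : ℝ) : ℂ) * Complex.I) =
        Complex.exp (Complex.I * zm * t) := by
      rw [← Complex.exp_add, ← Complex.exp_add]
      congr 1
      rw [hzmdef]
      push_cast
      linear_combination (-(t:ℂ) * η) * Complex.I_sq
    rw [hcos, hexp, ← e1, ← e2]
    have hf_eq : f t = (β (c * t) : ℂ) := rfl
    rw [← hf_eq]
    ring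
  have hcontp : Continuous fun t : ℝ ↦ Complex.exp (Complex.I * zp * t) := by fun_prop
  have hcontm : Continuous fun t : ℝ ↦ Complex.exp (Complex.I * zm * t) := by fun_prop
  have hIp : Integrable (fun t : ℝ ↦ f t * Complex.exp (Complex.I * zp * t)) :=
    (hfs.continuous.mul hcontp).integrable_of_hasCompactSupport hfc.mul_right
  have hIm : Integrable (fun t : ℝ ↦ f t * Complex.exp (Complex.I * zm * t)) :=
    (hfs.continuous.mul hcontm).integrable_of_hasCompactSupport hfc.mul_right
  have hsplit : (∫ t : ℝ, (β (c * t) : ℂ) *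
      Complex.exp (Complex.I * (t:ℂ) * (lam:ℂ)) * (Real.exp (-t * η) : ℂ) *
      (Real.cos (t * τ) : ℂ)) =
      (2:ℂ)⁻¹ * ((∫ t : ℝ, f t * Complex.exp (Complex.I * zp * t)) +
        (∫ t : ℝ, f t * Complex.exp (Complex.I * zm * t))) := by
    rw [← integral_add hIp hIm, ← MeasureTheory.integral_const_mul]
    exact integral_congr_ae (Filter.Eventually.of_forall hpt)
  have hkeyp : ‖∫ t : ℝ, f t * Complex.exp (Complex.I * zp * t)‖ ≤
      2 ^ N * (M 0 + M N) * s * ((1 + D) ^ N)⁻¹ := by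
    apply key (lam + τ)
    rw [_root_.abs_of_nonneg (by linarith : (0:ℝ) ≤ lam + τ)]
    calc |τ - lam| ≤ |τ| + |lam| := abs_sub _ _
      _ = lam + τ := by rw [_root_.abs_of_nonneg hτ, _root_.abs_of_nonneg (by linarith : (0:ℝ) ≤ lam)]; ring
  have hkeym : ‖∫ t : ℝ, f t * Complex.exp (Complex.I * zm * t)‖ ≤
      2 ^ N * (M 0 + M N) * s * ((1 + D) ^ N)⁻¹ := by
    apply key (lam - τ)
    rw [abs_sub_comm lam τ]
  have hpowinv : (0:ℝ) ≤ ((1 + D) ^ N)⁻¹ := by positivity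
  rw [hioi, hsplit, hrpow]
  calc ‖(2:ℂ)⁻¹ * ((∫ t : ℝ, f t * Complex.exp (Complex.I * zp * t)) +
        (∫ t : ℝ, f t * Complex.exp (Complex.I * zm * t)))‖
      = 2⁻¹ * ‖(∫ t : ℝ, f t * Complex.exp (Complex.I * zp * t)) +
        (∫ t : ℝ, f t * Complex.exp (Complex.I * zm * t))‖ := by
        rw [norm_mul]
        norm_num
    _ ≤ 2⁻¹ * (‖∫ t : ℝ, f t * Complex.exp (Complex.I * zp * t)‖ +
        ‖∫ t : ℝ, f t * Complex.exp (Complex.I * zm * t)‖) := by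
        apply mul_le_mul_of_nonneg_left (norm_add_le _ _) (by norm_num)
    _ ≤ 2⁻¹ * (2 ^ N * (M 0 + M N) * s * ((1 + D) ^ N)⁻¹ +
        2 ^ N * (M 0 + M N) * s * ((1 + D) ^ N)⁻¹) := by
        apply mul_le_mul_of_nonneg_left (add_le_add hkeyp hkeym) (by norm_num)
    _ = 2 ^ N * (M 0 + M N) * s * ((1 + D) ^ N)⁻¹ := by ring
    _ ≤ (2 ^ N * (M 0 + M N) + 1) * s * ((1 + D) ^ N)⁻¹ := by
        apply mul_le_mul_of_nonneg_right _ hpowinv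
        apply mul_le_mul_of_nonneg_right _ hs.le
        linarith
end

section
/- Let β : ℝ → ℝ be a smooth function supported in the interval (1/2, 2). There is a constant C (depending only on β) such that for all real λ ≥ 1, all η ∈ (0, 1], and all real τ ≥ 0, the sum over all integers j with 2^j ≤ 1/λ of |∫_0^∞ β(2^(−j) t) e^(i t λ) e^(−t η) cos(t τ) dt| is at most C/(λ + τ). -/
open MeasureTheory Real Complex ENNReal

namespace Stmt4Aux

open Set Function

lemma one_le_inf : (1 : WithTop ℕ∞) ≤ ((⊤:ℕ∞) : WithTop ℕ∞) := by exact_mod_cast le_top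

lemma hasDerivAt_scaled (f : ℝ → ℝ) (hf : Differentiable ℝ f) (s t : ℝ) :
    HasDerivAt (fun u : ℝ => ((f (s * u) : ℝ) : ℂ)) ((s * deriv f (s * t) : ℝ) : ℂ) t := by
  have h1 : HasDerivAt (fun u : ℝ => s * u) s t := by
    simpa using (hasDerivAt_id t).const_mul s
  have h2 : HasDerivAt f (deriv f (s * t)) (s * t) := (hf (s * t)).hasDerivAt
  have h3 := (h2.comp t h1).ofReal_comp
  have : deriv f (s * t) * s = s * deriv f (s * t) := by ring
  rw [this] at h3
  exact h3

lemma deriv_scaled (f : ℝ → ℝ) (hf : Differentiable ℝ f) (s : ℝ) :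
    deriv (fun u : ℝ => ((f (s * u) : ℝ) : ℂ)) = fun t => ((s * deriv f (s * t) : ℝ) : ℂ) :=
  funext fun t => (hasDerivAt_scaled f hf s t).deriv

lemma hasDerivAt_texp (z : ℂ) (t : ℝ) :
    HasDerivAt (fun u : ℝ => Complex.exp ((u : ℂ) * z)) (z * Complex.exp ((t : ℂ) * z)) t := by
  have h : HasDerivAt (fun w : ℂ => Complex.exp (w * z))
      (Complex.exp ((t : ℂ) * z) * z) (t : ℂ) := by
    simpa using ((hasDerivAt_id ((t : ℂ))).mul_const z).cexp
  have := h.comp_ofReal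
  simpa [mul_comm] using this

lemma contDiff_texp (z : ℂ) : ContDiff ℝ ((⊤:ℕ∞) : WithTop ℕ∞) (fun u : ℝ => Complex.exp ((u : ℂ) * z)) := by
  have h1 : ContDiff ℝ ((⊤:ℕ∞) : WithTop ℕ∞) (fun u : ℝ => (u : ℂ)) := Complex.ofRealCLM.contDiff
  have h2 : ContDiff ℂ ((⊤:ℕ∞) : WithTop ℕ∞) Complex.exp := Complex.contDiff_exp
  exact (h2.restrict_scalars ℝ).comp (h1.mul contDiff_const)

lemma ibp1 (ψ : ℝ → ℂ) (hψ : ContDiff ℝ ((⊤:ℕ∞) : WithTop ℕ∞) ψ) (hc : HasCompactSupport ψ)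
    (h0 : ψ 0 = 0) (z : ℂ) :
    z * ∫ t in Set.Ioi (0:ℝ), ψ t * Complex.exp ((t : ℂ) * z)
      = - ∫ t in Set.Ioi (0:ℝ), deriv ψ t * Complex.exp ((t : ℂ) * z) := by
  set G : ℝ → ℂ := fun t => ψ t * Complex.exp ((t : ℂ) * z) with hGdef
  have hder : ∀ t : ℝ, HasDerivAt G
      (deriv ψ t * Complex.exp ((t : ℂ) * z) + z * (ψ t * Complex.exp ((t : ℂ) * z))) t := by
    intro t
    have h1 : HasDerivAt ψ (deriv ψ t) t := (hψ.differentiable (zero_lt_one.trans_le one_le_inf).ne' t).hasDerivAt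
    have h2 := h1.mul (hasDerivAt_texp z t)
    change HasDerivAt (ψ * fun u : ℝ => Complex.exp ((u : ℂ) * z)) _ t
    exact h2.congr_deriv (by ring)
  have hGc : HasCompactSupport G := by
    have : HasCompactSupport (ψ * fun t : ℝ => Complex.exp ((t : ℂ) * z)) := hc.mul_right
    exact this
  have hG1 : ContDiff ℝ 1 G := (hψ.mul (contDiff_texp z)).of_le one_le_inf
  have hzero : ∫ t in Set.Ioi (0:ℝ), deriv G t = 0 := by
    rw [HasCompactSupport.integral_Ioi_deriv_eq hG1 hGc 0]
    simp [hGdef, h0]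
  have hderiveq : deriv G = fun t =>
      deriv ψ t * Complex.exp ((t : ℂ) * z) + z * (ψ t * Complex.exp ((t : ℂ) * z)) :=
    funext fun t => (hder t).deriv
  rw [hderiveq] at hzero
  have hint1 : IntegrableOn (fun t : ℝ => deriv ψ t * Complex.exp ((t : ℂ) * z))
      (Set.Ioi (0:ℝ)) := by
    have hcs : HasCompactSupport (deriv ψ * fun t : ℝ => Complex.exp ((t : ℂ) * z)) :=
      hc.deriv.mul_right
    exact (((hψ.continuous_deriv one_le_inf).mul (contDiff_texp z).continuous).integrable_of_hasCompactSupport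
      hcs).integrableOn
  have hint2 : IntegrableOn (fun t : ℝ => z * (ψ t * Complex.exp ((t : ℂ) * z)))
      (Set.Ioi (0:ℝ)) := by
    have hcs : HasCompactSupport (ψ * fun t : ℝ => Complex.exp ((t : ℂ) * z)) := hc.mul_right
    exact (((hψ.continuous.mul (contDiff_texp z).continuous).integrable_of_hasCompactSupport
      hcs).integrableOn).const_mul z
  rw [MeasureTheory.integral_add hint1 hint2, MeasureTheory.integral_const_mul] at hzero
  linear_combination hzero

lemma ibp2 (ψ : ℝ → ℂ) (hψ : ContDiff ℝ ((⊤:ℕ∞) : WithTop ℕ∞) ψ) (hc : HasCompactSupport ψ)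
    (h0 : ψ 0 = 0) (h1 : deriv ψ 0 = 0) (z : ℂ) :
    z ^ 2 * ∫ t in Set.Ioi (0:ℝ), ψ t * Complex.exp ((t : ℂ) * z)
      = ∫ t in Set.Ioi (0:ℝ), deriv (deriv ψ) t * Complex.exp ((t : ℂ) * z) := by
  have hψ' : ContDiff ℝ ((⊤:ℕ∞) : WithTop ℕ∞) (deriv ψ) := (contDiff_infty_iff_deriv.mp hψ).2
  have e1 := ibp1 ψ hψ hc h0 z
  have e2 := ibp1 (deriv ψ) hψ' hc.deriv h1 z
  calc z ^ 2 * ∫ t in Set.Ioi (0:ℝ), ψ t * Complex.exp ((t : ℂ) * z)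
      = z * (z * ∫ t in Set.Ioi (0:ℝ), ψ t * Complex.exp ((t : ℂ) * z)) := by ring
    _ = -(z * ∫ t in Set.Ioi (0:ℝ), deriv ψ t * Complex.exp ((t : ℂ) * z)) := by
        rw [e1]; ring
    _ = ∫ t in Set.Ioi (0:ℝ), deriv (deriv ψ) t * Complex.exp ((t : ℂ) * z) := by
        rw [e2]; ring

lemma norm_exp_le_one {z : ℂ} (hz : z.re ≤ 0) {t : ℝ} (ht : 0 ≤ t) :
    ‖Complex.exp ((t : ℂ) * z)‖ ≤ 1 := by
  rw [Complex.norm_exp]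
  have : ((t : ℂ) * z).re = t * z.re := by simp [Complex.mul_re]
  rw [this]
  exact Real.exp_le_one_iff.mpr (mul_nonpos_of_nonneg_of_nonpos ht hz)

lemma norm_F_le (ψ : ℝ → ℂ) (hcont : Continuous ψ) (hc : HasCompactSupport ψ)
    {z : ℂ} (hz : z.re ≤ 0) :
    ‖∫ t in Set.Ioi (0:ℝ), ψ t * Complex.exp ((t : ℂ) * z)‖
      ≤ ∫ t in Set.Ioi (0:ℝ), ‖ψ t‖ := by
  apply MeasureTheory.norm_integral_le_of_norm_le
  · exact (hcont.norm.integrable_of_hasCompactSupport hc.norm).integrableOn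
  · filter_upwards [ae_restrict_mem measurableSet_Ioi] with t ht
    calc ‖ψ t * Complex.exp ((t : ℂ) * z)‖ = ‖ψ t‖ * ‖Complex.exp ((t : ℂ) * z)‖ := norm_mul _ _
      _ ≤ ‖ψ t‖ * 1 := by
          have := norm_exp_le_one hz (le_of_lt ht)
          exact mul_le_mul_of_nonneg_left this (norm_nonneg _)
      _ = ‖ψ t‖ := mul_one _

lemma integral_norm_scaled (f : ℝ → ℝ) {s : ℝ} (hs : 0 < s) :
    ∫ t in Set.Ioi (0:ℝ), ‖((f (s * t) : ℝ) : ℂ)‖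
      = s⁻¹ * ∫ t in Set.Ioi (0:ℝ), |f t| := by
  have h := integral_comp_mul_left_Ioi (fun u => |f u|) 0 hs
  simp only [mul_zero] at h
  have : (fun t : ℝ => ‖((f (s * t) : ℝ) : ℂ)‖) = fun t : ℝ => |f (s * t)| := by
    funext t; rw [Complex.norm_real, Real.norm_eq_abs]
  rw [this, h, smul_eq_mul]

lemma tsum_int_geom (j₀ : ℤ) :
    ∑' k : ℤ, ((2 : ℝ≥0∞)⁻¹) ^ (k - j₀).natAbs ≤ 3 := by
  have h := (Equiv.subRight j₀).tsum_eq (f := fun k : ℤ => ((2 : ℝ≥0∞)⁻¹) ^ k.natAbs)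
  simp only [Equiv.subRight_apply] at h
  rw [h]
  have hsplit := tsum_of_nat_of_neg_add_one
    (f := fun k : ℤ => ((2 : ℝ≥0∞)⁻¹) ^ k.natAbs)
    ENNReal.summable ENNReal.summable
  rw [hsplit]
  have h1 : ∑' n : ℕ, ((2 : ℝ≥0∞)⁻¹) ^ ((n : ℤ)).natAbs = 2 := by
    simp only [Int.natAbs_natCast]
    rw [ENNReal.tsum_geometric, ENNReal.one_sub_inv_two, inv_inv]
  have h2 : ∑' n : ℕ, ((2 : ℝ≥0∞)⁻¹) ^ ((-((n : ℤ) + 1)).natAbs) = 1 := by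
    have : ∀ n : ℕ, (-((n : ℤ) + 1)).natAbs = n + 1 := by
      intro n
      rw [Int.natAbs_neg]
      exact_mod_cast Int.natAbs_natCast (n + 1)
    simp only [this]
    rw [ENNReal.tsum_geometric_add_one, ENNReal.one_sub_inv_two, inv_inv]
    rw [ENNReal.inv_mul_cancel (by norm_num) (by norm_num)]
  rw [h1, h2]
  norm_num

end Stmt4Aux

open Stmt4Aux

set_option maxHeartbeats 2000000 in
/-- summed symbol bound for the dyadic resolvent pieces with `2^j ≤ 1/λ`. -/
theorem stmt_4 (β : ℝ → ℝ) (hβ : ContDiff ℝ (⊤ : ℕ∞) β)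
    (hsupp : Function.support β ⊆ Set.Ioo (1/2) 2) :
    ∃ C : ℝ, 0 < C ∧ ∀ lam : ℝ, 1 ≤ lam → ∀ η : ℝ, 0 < η → η ≤ 1 →
      ∀ τ : ℝ, 0 ≤ τ →
        ∑' j : {j : ℤ // (2:ℝ) ^ (j:ℤ) ≤ 1 / lam},
            (‖∫ t in Set.Ioi (0:ℝ), (β ((2:ℝ) ^ (-(j:ℤ)) * t) : ℂ) *
                Complex.exp (Complex.I * (t:ℂ) * (lam:ℂ)) * (Real.exp (-t * η) : ℂ) *
                (Real.cos (t * τ) : ℂ)‖₊ : ℝ≥0∞) ≤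
          ENNReal.ofReal (C / (lam + τ)) := by
  classical
  have hβi : ContDiff ℝ ((⊤:ℕ∞) : WithTop ℕ∞) β := hβ.of_le (by simp)
  have hβdiff : Differentiable ℝ β := hβi.differentiable (zero_lt_one.trans_le one_le_inf).ne'
  have hβ'c : ContDiff ℝ ((⊤:ℕ∞) : WithTop ℕ∞) (deriv β) := (contDiff_infty_iff_deriv.mp hβi).2
  have hβ'diff : Differentiable ℝ (deriv β) := hβ'c.differentiable (zero_lt_one.trans_le one_le_inf).ne'
  have hβcs : HasCompactSupport β := by
    apply HasCompactSupport.intro (isCompact_Icc (a := (1/2:ℝ)) (b := 2))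
    intro x hx
    by_contra h
    exact hx (Set.Ioo_subset_Icc_self (hsupp h))
  have hβ0 : β 0 = 0 := by
    by_contra h
    have h2 := hsupp h
    rw [Set.mem_Ioo] at h2
    norm_num at h2
  have hβ'0 : deriv β 0 = 0 := by
    by_contra h
    have h1 : (0:ℝ) ∈ tsupport β := support_deriv_subset h
    have h2 : tsupport β ⊆ Set.Icc (1/2) 2 :=
      closure_minimal (hsupp.trans Set.Ioo_subset_Icc_self) isClosed_Icc
    have h3 := h2 h1
    rw [Set.mem_Icc] at h3
    norm_num at h3
  set A : ℝ := ∫ t in Set.Ioi (0:ℝ), |β t| with hAdef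
  set B : ℝ := ∫ t in Set.Ioi (0:ℝ), |deriv (deriv β) t| with hBdef
  have hA0 : 0 ≤ A := MeasureTheory.integral_nonneg fun t => abs_nonneg _
  have hB0 : 0 ≤ B := MeasureTheory.integral_nonneg fun t => abs_nonneg _
  set c : ℝ := 18*A + 10*B + 1 with hcdef
  have hc0 : 0 < c := by linarith only [hA0, hB0, hcdef]
  refine ⟨3*c, by linarith only [hc0], ?_⟩
  intro lam hlam η hη0 hη1 τ hτ
  have hlam0 : (0:ℝ) < lam := lt_of_lt_of_le one_pos hlam
  set M : ℝ := lam + τ with hMdef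
  have hM0 : 0 < M := by positivity
  set j₀ : ℤ := Int.log 2 M⁻¹ with hj₀def
  have h2j₀ : (2:ℝ)^j₀ ≤ M⁻¹ := by
    have := Int.zpow_log_le_self (b := 2) (R := ℝ) one_lt_two (inv_pos.mpr hM0)
    push_cast at this
    exact this
  have h2j₀' : M⁻¹ < (2:ℝ)^(j₀+1) := by
    have := Int.lt_zpow_succ_log_self (b := 2) (R := ℝ) one_lt_two M⁻¹
    push_cast at this
    exact this
  set Q : ℝ := (2:ℝ)^j₀ with hQdef
  have hQ0 : 0 < Q := zpow_pos (by norm_num) _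
  have hQM1 : Q * M ≤ 1 := by
    have := mul_le_mul_of_nonneg_right h2j₀ hM0.le
    rwa [inv_mul_cancel₀ hM0.ne'] at this
  have hQM2 : 1 ≤ 2 * Q * M := by
    have h1 : (2:ℝ)^(j₀+1) = Q * 2 := by
      rw [hQdef, zpow_add_one₀ (by norm_num : (2:ℝ) ≠ 0)]
    have h2 := mul_lt_mul_of_pos_right h2j₀' hM0
    rw [inv_mul_cancel₀ hM0.ne', h1] at h2
    linarith
  -- per-term bound
  have key : ∀ j : ℤ, (2:ℝ)^j ≤ 1/lam →
      ‖∫ t in Set.Ioi (0:ℝ), (β ((2:ℝ) ^ (-j) * t) : ℂ) *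
          Complex.exp (Complex.I * (t:ℂ) * (lam:ℂ)) * (Real.exp (-t * η) : ℂ) *
          (Real.cos (t * τ) : ℂ)‖ ≤ (c/M) * (2:ℝ)^(-(((j - j₀).natAbs : ℤ))) := by
    intro j hj
    set s : ℝ := (2:ℝ)^(-j) with hsdef
    have hs0 : 0 < s := zpow_pos (by norm_num) _
    set p : ℝ := (2:ℝ)^j with hpdef
    have hp0 : 0 < p := zpow_pos (by norm_num) _
    have hps : s * p = 1 := by
      rw [hsdef, hpdef, ← zpow_add₀ (by norm_num : (2:ℝ) ≠ 0), neg_add_cancel, zpow_zero]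
    set φ : ℝ → ℂ := fun t => ((β (s * t) : ℝ) : ℂ) with hφdef
    have hφcd : ContDiff ℝ ((⊤:ℕ∞) : WithTop ℕ∞) φ := by
      have h1 : ContDiff ℝ ((⊤:ℕ∞) : WithTop ℕ∞) (fun t : ℝ => s * t) :=
        contDiff_const.mul contDiff_id
      have h2 : ContDiff ℝ ((⊤:ℕ∞) : WithTop ℕ∞) (fun t : ℝ => β (s * t)) := hβi.comp h1
      exact Complex.ofRealCLM.contDiff.comp h2
    have hφcont : Continuous φ := hφcd.continuous
    have hφcs : HasCompactSupport φ := by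
      have h1 : HasCompactSupport (fun t : ℝ => β (s * t)) := by
        have h2 := hβcs.comp_homeomorph (Homeomorph.mulLeft₀ s hs0.ne')
        exact h2
      exact h1.comp_left (g := fun x : ℝ => (x : ℂ)) Complex.ofReal_zero
    have hφ0 : φ 0 = 0 := by simp [hφdef, hβ0]
    have hdφ : deriv φ = fun t => ((s * deriv β (s * t) : ℝ) : ℂ) := deriv_scaled β hβdiff s
    have hdφ0 : deriv φ 0 = 0 := by rw [hdφ]; simp [hβ'0]
    have hddφ : deriv (deriv φ) = fun t => ((s * (s * deriv (deriv β) (s * t)) : ℝ) : ℂ) := by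
      rw [hdφ]
      have h1 : deriv (fun v : ℝ => s * deriv β v) = fun v => s * deriv (deriv β) v := by
        funext v
        exact deriv_const_mul _ (hβ'diff v)
      have h2 := deriv_scaled (fun v => s * deriv β v) (hβ'diff.const_mul s) s
      rw [h2]
      funext t
      rw [h1]
    set F : ℂ → ℂ := fun z => ∫ t in Set.Ioi (0:ℝ), φ t * Complex.exp ((t:ℂ) * z) with hFdef
    have N1 : ∀ z : ℂ, z.re ≤ 0 → ‖F z‖ ≤ p * A := by
      intro z hz
      have h := norm_F_le φ hφcont hφcs hz
      have h2 : ∫ t in Set.Ioi (0:ℝ), ‖φ t‖ = s⁻¹ * A := integral_norm_scaled β hs0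
      rw [h2, hsdef, zpow_neg, inv_inv, ← hpdef] at h
      exact h
    have N2 : ∀ z : ℂ, z.re ≤ 0 → z ≠ 0 → ‖F z‖ ≤ s * B / ‖z‖^2 := by
      intro z hz hz0
      have hibp := ibp2 φ hφcd hφcs hφ0 hdφ0 z
      have hβ''cont : Continuous (deriv (deriv β)) := hβ'c.continuous_deriv one_le_inf
      have hψcont : Continuous (deriv (deriv φ)) := by
        rw [hddφ]
        exact Complex.continuous_ofReal.comp
          (continuous_const.mul (continuous_const.mul
            (hβ''cont.comp (continuous_const.mul continuous_id))))
      have hψcs : HasCompactSupport (deriv (deriv φ)) := hφcs.deriv.deriv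
      have hnorm2 : ∫ t in Set.Ioi (0:ℝ), ‖deriv (deriv φ) t‖ = s * B := by
        rw [hddφ]
        have h3 := integral_norm_scaled (fun v => s * (s * deriv (deriv β) v)) hs0
        rw [h3]
        have h4 : (fun t : ℝ => |s * (s * deriv (deriv β) t)|)
            = fun t => (s^2) * |deriv (deriv β) t| := by
          funext t
          rw [abs_mul, abs_mul, abs_of_pos hs0]
          ring
        rw [h4, MeasureTheory.integral_const_mul, ← hBdef]
        field_simp
      have h5 : ‖z‖^2 * ‖F z‖ ≤ s * B := by
        calc ‖z‖^2 * ‖F z‖ = ‖z^2 * F z‖ := by rw [norm_mul, norm_pow]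
          _ = ‖∫ t in Set.Ioi (0:ℝ), deriv (deriv φ) t * Complex.exp ((t:ℂ) * z)‖ := by
              rw [hFdef]; rw [hibp]
          _ ≤ ∫ t in Set.Ioi (0:ℝ), ‖deriv (deriv φ) t‖ := norm_F_le _ hψcont hψcs hz
          _ = s * B := hnorm2
      have hz2 : (0:ℝ) < ‖z‖^2 := pow_pos (norm_pos_iff.mpr hz0) 2
      rw [le_div_iff₀ hz2]
      linarith [h5]
    set zp : ℂ := Complex.I * ((lam:ℂ) + (τ:ℂ)) - (η:ℂ) with hzpdef
    set zm : ℂ := Complex.I * ((lam:ℂ) - (τ:ℂ)) - (η:ℂ) with hzmdef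
    have hzp_re : zp.re = -η := by simp [hzpdef]
    have hzp_im : zp.im = lam + τ := by simp [hzpdef]
    have hzm_re : zm.re = -η := by simp [hzmdef]
    have hzm_im : zm.im = lam - τ := by simp [hzmdef]
    have hzp_re' : zp.re ≤ 0 := by rw [hzp_re]; linarith
    have hzm_re' : zm.re ≤ 0 := by rw [hzm_re]; linarith
    have hzp0 : zp ≠ 0 := by
      intro h
      rw [h] at hzp_re
      simp at hzp_re
      linarith
    have hzm0 : zm ≠ 0 := by
      intro h
      rw [h] at hzm_re
      simp at hzm_re
      linarith
    have hzp_norm : ‖zp‖^2 = η^2 + (lam + τ)^2 := by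
      rw [Complex.sq_norm, Complex.normSq_apply, hzp_re, hzp_im]
      ring
    have hzm_norm : ‖zm‖^2 = η^2 + (lam - τ)^2 := by
      rw [Complex.sq_norm, Complex.normSq_apply, hzm_re, hzm_im]
      ring
    -- pointwise rewrite of the integrand
    have hpt : ∀ t : ℝ, (β (s * t) : ℂ) * Complex.exp (Complex.I * (t:ℂ) * (lam:ℂ)) *
        (Real.exp (-t * η) : ℂ) * (Real.cos (t * τ) : ℂ)
        = (2⁻¹ : ℂ) * (φ t * Complex.exp ((t:ℂ) * zp))
          + (2⁻¹ : ℂ) * (φ t * Complex.exp ((t:ℂ) * zm)) := by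
      intro t
      have hcos : ((Real.cos (t * τ) : ℝ) : ℂ)
          = (Complex.exp (((t*τ:ℝ):ℂ) * Complex.I)
            + Complex.exp (-(((t*τ:ℝ):ℂ)) * Complex.I)) / 2 := by
        rw [Complex.ofReal_cos, _root_.eq_div_iff (two_ne_zero : (2:ℂ) ≠ 0), mul_comm]
        exact Complex.two_cos _
      have hexpη : ((Real.exp (-t * η) : ℝ) : ℂ) = Complex.exp (((-t * η : ℝ)):ℂ) :=
        Complex.ofReal_exp _
      have e1 : Complex.exp (Complex.I * (t:ℂ) * (lam:ℂ)) * Complex.exp (((-t * η : ℝ)):ℂ) *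
          Complex.exp (((t*τ:ℝ):ℂ) * Complex.I) = Complex.exp ((t:ℂ) * zp) := by
        rw [← Complex.exp_add, ← Complex.exp_add]
        congr 1
        rw [hzpdef]
        push_cast
        ring
      have e2 : Complex.exp (Complex.I * (t:ℂ) * (lam:ℂ)) * Complex.exp (((-t * η : ℝ)):ℂ) *
          Complex.exp (-(((t*τ:ℝ):ℂ)) * Complex.I) = Complex.exp ((t:ℂ) * zm) := by
        rw [← Complex.exp_add, ← Complex.exp_add]
        congr 1
        rw [hzmdef]
        push_cast
        ring
      calc (β (s * t) : ℂ) * Complex.exp (Complex.I * (t:ℂ) * (lam:ℂ)) *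
            (Real.exp (-t * η) : ℂ) * (Real.cos (t * τ) : ℂ)
          = (2⁻¹ : ℂ) * ((β (s * t) : ℂ) * (Complex.exp (Complex.I * (t:ℂ) * (lam:ℂ)) *
              Complex.exp (((-t * η : ℝ)):ℂ) * Complex.exp (((t*τ:ℝ):ℂ) * Complex.I)))
            + (2⁻¹ : ℂ) * ((β (s * t) : ℂ) * (Complex.exp (Complex.I * (t:ℂ) * (lam:ℂ)) *
              Complex.exp (((-t * η : ℝ)):ℂ) * Complex.exp (-(((t*τ:ℝ):ℂ)) * Complex.I))) := by
            rw [hcos, hexpη]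
            ring
        _ = (2⁻¹ : ℂ) * (φ t * Complex.exp ((t:ℂ) * zp))
            + (2⁻¹ : ℂ) * (φ t * Complex.exp ((t:ℂ) * zm)) := by
            rw [e1, e2, hφdef]
    have hintegr : ∀ z : ℂ, MeasureTheory.IntegrableOn
        (fun t : ℝ => φ t * Complex.exp ((t:ℂ) * z)) (Set.Ioi (0:ℝ)) := by
      intro z
      have hcs : HasCompactSupport (φ * fun t : ℝ => Complex.exp ((t:ℂ) * z)) := hφcs.mul_right
      exact ((hφcont.mul (contDiff_texp z).continuous).integrable_of_hasCompactSupport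
        hcs).integrableOn
    have hInt : (∫ t in Set.Ioi (0:ℝ), (β (s * t) : ℂ) *
          Complex.exp (Complex.I * (t:ℂ) * (lam:ℂ)) * (Real.exp (-t * η) : ℂ) *
          (Real.cos (t * τ) : ℂ))
        = 2⁻¹ * F zp + 2⁻¹ * F zm := by
      rw [MeasureTheory.setIntegral_congr_fun measurableSet_Ioi (fun t _ => hpt t)]
      rw [MeasureTheory.integral_add ((hintegr zp).const_mul _) ((hintegr zm).const_mul _)]
      rw [MeasureTheory.integral_const_mul, MeasureTheory.integral_const_mul]
    rw [hInt]
    have hnormI : ‖2⁻¹ * F zp + 2⁻¹ * F zm‖ ≤ 2⁻¹ * ‖F zp‖ + 2⁻¹ * ‖F zm‖ := by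
      calc ‖2⁻¹ * F zp + 2⁻¹ * F zm‖ ≤ ‖(2⁻¹ : ℂ) * F zp‖ + ‖(2⁻¹ : ℂ) * F zm‖ := norm_add_le _ _
        _ = 2⁻¹ * ‖F zp‖ + 2⁻¹ * ‖F zm‖ := by
            rw [norm_mul, norm_mul]
            norm_num
    refine le_trans hnormI ?_
    rcases le_or_gt j j₀ with hjle | hjgt
    · -- small j : trivial bound
      rw [show -(((j - j₀).natAbs : ℤ)) = j - j₀ by omega]
      set P : ℝ := (2:ℝ)^(j - j₀) with hPdef
      have hP0 : 0 < P := zpow_pos (by norm_num) _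
      have hQP : p = Q * P := by
        rw [hpdef, hQdef, hPdef, ← zpow_add₀ (by norm_num : (2:ℝ) ≠ 0)]
        congr 1
        omega
      have hAc : A ≤ c := by linarith only [hA0, hB0, hcdef]
      calc 2⁻¹ * ‖F zp‖ + 2⁻¹ * ‖F zm‖
          ≤ 2⁻¹ * (p * A) + 2⁻¹ * (p * A) := by
            have h1 := N1 zp hzp_re'
            have h2 := N1 zm hzm_re'
            linarith only [h1, h2]
        _ = p * A := by ring
        _ ≤ c / M * P := by
            rw [div_mul_eq_mul_div, le_div_iff₀ hM0, hQP]
            calc Q * P * A * M = (Q * M) * (P * A) := by ring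
              _ ≤ 1 * (P * A) := by
                  apply mul_le_mul_of_nonneg_right hQM1
                  positivity
              _ = P * A := by ring
              _ ≤ P * c := by
                  apply mul_le_mul_of_nonneg_left hAc hP0.le
              _ = c * P := by ring
    · -- large j
      rw [show -(((j - j₀).natAbs : ℤ)) = j₀ - j by omega]
      have hQs : (2:ℝ)^(j₀ - j) = Q * s := by
        rw [hQdef, hsdef, ← zpow_add₀ (by norm_num : (2:ℝ) ≠ 0), sub_eq_add_neg]
      rw [hQs]
      rcases le_or_gt τ (2 * lam) with hτ2 | hτ2
      · -- τ small : still trivial bound works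
        have hMlam : M ≤ 3 * lam := by rw [hMdef]; linarith
        have hplam : p * lam ≤ 1 := by
          rw [hpdef]
          calc (2:ℝ)^j * lam ≤ (1/lam) * lam := mul_le_mul_of_nonneg_right hj hlam0.le
            _ = 1 := by field_simp
        have hMp : M * p ≤ 3 := by
          have hh := mul_le_mul_of_nonneg_right hMlam hp0.le
          linarith only [hh, hplam]
        have h18 : 18 * A ≤ c := by linarith only [hA0, hB0, hcdef]
        calc 2⁻¹ * ‖F zp‖ + 2⁻¹ * ‖F zm‖
            ≤ 2⁻¹ * (p * A) + 2⁻¹ * (p * A) := by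
              have h1 := N1 zp hzp_re'
              have h2 := N1 zm hzm_re'
              linarith only [h1, h2]
          _ = p * A := by ring
          _ ≤ c / M * (Q * s) := by
              rw [div_mul_eq_mul_div, le_div_iff₀ hM0]
              have hmain : (2*M*p) * (p * A * M) ≤ (2*M*p) * (c * (Q * s)) := by
                have l1 : (2*M*p) * (p * A * M) = 2*(M*p)^2*A := by ring
                have l2 : (2*M*p) * (c * (Q * s)) = (c * (2*Q*M)) * (s*p) := by ring
                rw [l1, l2, hps, mul_one]
                have hsq : (M*p)^2 ≤ 9 := by nlinarith only [hMp, mul_pos hM0 hp0]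
                calc 2*(M*p)^2*A ≤ 2*9*A := by
                      have hh := mul_le_mul_of_nonneg_right hsq hA0
                      linarith only [hh]
                  _ = 18*A := by ring
                  _ ≤ c := h18
                  _ ≤ c * (2*Q*M) := le_mul_of_one_le_right hc0.le hQM2
              exact le_of_mul_le_mul_left hmain (by positivity)
      · -- τ large : integration by parts bound
        have hzp_ge : M^2 ≤ ‖zp‖^2 := by
          rw [hzp_norm, hMdef]
          linarith only [sq_nonneg η]
        have hzm_ge : (M/3)^2 ≤ ‖zm‖^2 := by
          rw [hzm_norm, hMdef]
          nlinarith only [sq_nonneg η, mul_nonneg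
            (by linarith only [hτ2] : (0:ℝ) ≤ τ - 2*lam)
            (by linarith only [hτ2, hlam0] : (0:ℝ) ≤ 2*τ - lam)]
        have hM2 : (0:ℝ) < M^2 := by positivity
        have hM9 : (0:ℝ) < (M/3)^2 := by positivity
        have h1 : ‖F zp‖ ≤ s * B / M^2 := by
          refine le_trans (N2 zp hzp_re' hzp0) ?_
          apply div_le_div_of_nonneg_left (by positivity) hM2 hzp_ge
        have h2 : ‖F zm‖ ≤ s * B / (M/3)^2 := by
          refine le_trans (N2 zm hzm_re' hzm0) ?_
          apply div_le_div_of_nonneg_left (by positivity) hM9 hzm_ge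
        have h2' : ‖F zm‖ ≤ 9 * (s * B) / M^2 := by
          refine le_trans h2 (le_of_eq ?_)
          field_simp
          ring
        have h10 : 10 * B ≤ c := by linarith only [hA0, hB0, hcdef]
        calc 2⁻¹ * ‖F zp‖ + 2⁻¹ * ‖F zm‖
            ≤ 2⁻¹ * (s * B / M^2) + 2⁻¹ * (9 * (s*B) / M^2) := by linarith only [h1, h2']
          _ = 5 * (s*B) / M^2 := by ring
          _ ≤ c / M * (Q * s) := by
              rw [div_le_iff₀ hM2]
              have l3 : c / M * (Q * s) * M^2 = (c * (2*Q*M)) * (s/2) * (M/M) := by ring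
              rw [l3, div_self hM0.ne', mul_one]
              have l4 : c * (s/2) ≤ (c * (2*Q*M)) * (s/2) := by
                apply mul_le_mul_of_nonneg_right _ (by positivity)
                exact le_mul_of_one_le_right hc0.le hQM2
              have l5 : 5 * (s*B) ≤ c * (s/2) := by
                have hh := mul_le_mul_of_nonneg_right h10 (by positivity : (0:ℝ) ≤ s/2)
                linarith only [hh]
              linarith only [l4, l5]
  -- summation
  have hterm : ∀ j : {j : ℤ // (2:ℝ) ^ (j:ℤ) ≤ 1 / lam},
      (‖∫ t in Set.Ioi (0:ℝ), (β ((2:ℝ) ^ (-(j:ℤ)) * t) : ℂ) *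
          Complex.exp (Complex.I * (t:ℂ) * (lam:ℂ)) * (Real.exp (-t * η) : ℂ) *
          (Real.cos (t * τ) : ℂ)‖₊ : ℝ≥0∞)
        ≤ ENNReal.ofReal (c/M) * ((2:ℝ≥0∞)⁻¹) ^ (((j:ℤ) - j₀).natAbs) := by
    intro j
    rw [← enorm_eq_nnnorm, ← ofReal_norm]
    refine le_trans (ENNReal.ofReal_le_ofReal (key (j:ℤ) j.2)) ?_
    rw [ENNReal.ofReal_mul (by positivity)]
    apply mul_le_mul_of_nonneg_left _ zero_le
    set n : ℕ := (((j:ℤ) - j₀).natAbs) with hn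
    have h1 : (2:ℝ)^(-(n:ℤ)) = ((2:ℝ)^n)⁻¹ := by
      rw [zpow_neg, zpow_natCast]
    rw [h1, ENNReal.ofReal_inv_of_pos (by positivity), ENNReal.ofReal_pow (by norm_num)]
    rw [ENNReal.ofReal_ofNat, ENNReal.inv_pow]
  calc ∑' j : {j : ℤ // (2:ℝ) ^ (j:ℤ) ≤ 1 / lam},
        (‖∫ t in Set.Ioi (0:ℝ), (β ((2:ℝ) ^ (-(j:ℤ)) * t) : ℂ) *
            Complex.exp (Complex.I * (t:ℂ) * (lam:ℂ)) * (Real.exp (-t * η) : ℂ) *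
            (Real.cos (t * τ) : ℂ)‖₊ : ℝ≥0∞)
      ≤ ∑' j : {j : ℤ // (2:ℝ) ^ (j:ℤ) ≤ 1 / lam},
          ENNReal.ofReal (c/M) * ((2:ℝ≥0∞)⁻¹) ^ (((j:ℤ) - j₀).natAbs) :=
        ENNReal.tsum_le_tsum hterm
    _ = ENNReal.ofReal (c/M) * ∑' j : {j : ℤ // (2:ℝ) ^ (j:ℤ) ≤ 1 / lam},
          ((2:ℝ≥0∞)⁻¹) ^ (((j:ℤ) - j₀).natAbs) := ENNReal.tsum_mul_left
    _ ≤ ENNReal.ofReal (c/M) * ∑' k : ℤ, ((2:ℝ≥0∞)⁻¹) ^ ((k - j₀).natAbs) := by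
        apply mul_le_mul_of_nonneg_left _ zero_le
        exact ENNReal.tsum_comp_le_tsum_of_injective Subtype.val_injective
          (fun k => ((2:ℝ≥0∞)⁻¹) ^ ((k - j₀).natAbs))
    _ ≤ ENNReal.ofReal (c/M) * 3 := by
        apply mul_le_mul_of_nonneg_left (tsum_int_geom j₀) zero_le
    _ ≤ ENNReal.ofReal (3 * c / (lam + τ)) := by
        rw [show (3:ℝ≥0∞) = ENNReal.ofReal 3 by norm_num]
        rw [← ENNReal.ofReal_mul (by positivity)]
        apply ENNReal.ofReal_le_ofReal
        rw [← hMdef]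
        rw [div_mul_eq_mul_div, mul_comm]
end

section
/- Let a : ℝ → ℂ be a smooth function supported in (−1/10, 1/10) with a(0) = 1, let φ = a · 𝟙_{[0,1]}, and define φ̂(τ) = ∫_ℝ φ(s) e^(−i s τ) ds. Then for every η ∈ (0, 1] and every real q with 2 < q < ∞: (i) ∫_0^∞ |φ̂(η log x)|² dx/x < ∞, while (ii) ∫_0^∞ x^(q/2) |φ̂(η log x)|^q dx/x = ∞. -/
open MeasureTheory Real Set

lemma stmt11_aux_eq (a : ℝ → ℂ) (τ : ℝ) :
    (∫ s : ℝ, Set.indicator (Set.Icc (0:ℝ) 1) a s *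
        Complex.exp (-(Complex.I * (s:ℂ) * (τ:ℂ)))) =
    ∫ s in (0:ℝ)..1, a s * Complex.exp (-(Complex.I * (s:ℂ) * (τ:ℂ))) := by
  rw [intervalIntegral.integral_of_le zero_le_one, ← MeasureTheory.integral_Icc_eq_integral_Ioc,
    ← MeasureTheory.integral_indicator measurableSet_Icc]
  congr 1
  funext s
  rw [Set.indicator_mul_left]

lemma stmt11_aux_norm (f : ℝ → ℂ) (τ : ℝ) :
    ‖∫ s in (0:ℝ)..1, f s * Complex.exp (-(Complex.I * (s:ℂ) * (τ:ℂ)))‖ ≤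
      ∫ s in (0:ℝ)..1, ‖f s‖ := by
  refine le_trans (intervalIntegral.norm_integral_le_integral_norm zero_le_one) ?_
  refine le_of_eq (intervalIntegral.integral_congr fun s _ => ?_)
  rw [norm_mul]
  have : ‖Complex.exp (-(Complex.I * (s:ℂ) * (τ:ℂ)))‖ = 1 := by
    rw [Complex.norm_exp]
    simp
  rw [this, mul_one]

lemma stmt11_aux_ibp (f : ℝ → ℂ) (hf : ContDiff ℝ (⊤:ℕ∞) f) (τ : ℝ) :
    -(Complex.I * τ) * (∫ s in (0:ℝ)..1, f s * Complex.exp (-(Complex.I * (s:ℂ) * (τ:ℂ))))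
      = f 1 * Complex.exp (-(Complex.I * (τ:ℂ))) - f 0
        - ∫ s in (0:ℝ)..1, deriv f s * Complex.exp (-(Complex.I * (s:ℂ) * (τ:ℂ))) := by
  set c : ℂ := -(Complex.I * τ) with hc
  have hcs : ∀ s : ℝ, -(Complex.I * (s:ℂ) * (τ:ℂ)) = c * (s:ℂ) := by intro s; rw [hc]; ring
  have hE : ∀ x : ℝ, HasDerivAt (fun s : ℝ => Complex.exp (c * (s:ℂ)))
      (c * Complex.exp (c * (x:ℂ))) x := by
    intro x
    have h1 : HasDerivAt (fun s : ℝ => c * (s:ℂ)) c x := by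
      simpa using (Complex.ofRealCLM.hasDerivAt (x := x)).const_mul c
    simpa [mul_comm] using h1.cexp
  have hfd : Differentiable ℝ f := hf.differentiable (by simp)
  have hfc : Continuous f := hfd.continuous
  have hf'c : Continuous (deriv f) := hf.continuous_deriv (by exact_mod_cast le_top)
  have hEc : Continuous fun s : ℝ => Complex.exp (c * (s:ℂ)) := by
    exact Complex.continuous_exp.comp (by continuity)
  have key := intervalIntegral.integral_deriv_mul_eq_sub (a := 0) (b := 1)
      (u := f) (v := fun s : ℝ => Complex.exp (c * (s:ℂ)))
      (u' := deriv f) (v' := fun s : ℝ => c * Complex.exp (c * (s:ℂ)))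
      (fun x _ => (hfd x).hasDerivAt) (fun x _ => hE x)
      (hf'c.intervalIntegrable 0 1) ((continuous_const.mul hEc).intervalIntegrable 0 1)
  have hsplit : (∫ s in (0:ℝ)..1, (deriv f s * Complex.exp (c * (s:ℂ)) +
        f s * (c * Complex.exp (c * (s:ℂ)))))
      = (∫ s in (0:ℝ)..1, deriv f s * Complex.exp (c * (s:ℂ)))
        + c * ∫ s in (0:ℝ)..1, f s * Complex.exp (c * (s:ℂ)) := by
    rw [intervalIntegral.integral_add (f := fun s => deriv f s * Complex.exp (c * (s:ℂ)))
      (g := fun s => f s * (c * Complex.exp (c * (s:ℂ)))) ((hf'c.mul hEc).intervalIntegrable 0 1)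
      ((hfc.mul (continuous_const.mul hEc)).intervalIntegrable 0 1)]
    congr 1
    rw [← intervalIntegral.integral_const_mul]
    exact intervalIntegral.integral_congr fun s _ => by ring
  rw [hsplit] at key
  simp only [hcs]
  simp only [Complex.ofReal_zero, Complex.ofReal_one, mul_zero, mul_one, Complex.exp_zero] at key
  have h1 : Complex.exp c = Complex.exp (-(Complex.I * (τ:ℂ))) := by rw [hc]
  rw [h1]
  linear_combination key

/-- the quasimode of the cusp example is in `L²` but its restriction
to the vertical geodesic is in no `L^q`, `2 < q < ∞`. -/
theorem stmt_11 (a : ℝ → ℂ) (ha : ContDiff ℝ (⊤ : ℕ∞) a)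
    (hsupp : Function.support a ⊆ Set.Ioo (-(1/10)) (1/10)) (ha0 : a 0 = 1)
    (η : ℝ) (hη0 : 0 < η) (hη1 : η ≤ 1) (q : ℝ) (hq : 2 < q) :
    (∫⁻ x in Set.Ioi (0:ℝ),
        ENNReal.ofReal
          (‖∫ s : ℝ, Set.indicator (Set.Icc (0:ℝ) 1) a s *
              Complex.exp (-(Complex.I * (s:ℂ) * ((η * Real.log x : ℝ) : ℂ)))‖ ^ 2 / x) < ⊤) ∧
    (∫⁻ x in Set.Ioi (0:ℝ),
        ENNReal.ofReal
          (x ^ (q/2) *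
            ‖∫ s : ℝ, Set.indicator (Set.Icc (0:ℝ) 1) a s *
              Complex.exp (-(Complex.I * (s:ℂ) * ((η * Real.log x : ℝ) : ℂ)))‖ ^ q / x) = ⊤) := by
  set g : ℝ → ℂ := fun τ =>
    ∫ s in (0:ℝ)..1, a s * Complex.exp (-(Complex.I * (s:ℂ) * (τ:ℂ))) with hgdef
  set h : ℝ → ℂ := fun τ =>
    ∫ s in (0:ℝ)..1, deriv a s * Complex.exp (-(Complex.I * (s:ℂ) * (τ:ℂ))) with hhdef
  have haux : ∀ τ : ℝ, (∫ s : ℝ, Set.indicator (Set.Icc (0:ℝ) 1) a s *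
      Complex.exp (-(Complex.I * (s:ℂ) * (τ:ℂ)))) = g τ := fun τ => stmt11_aux_eq a τ
  -- values at endpoints
  have ha1 : a 1 = 0 := by
    by_contra hne
    have h1 := hsupp (Function.mem_support.mpr hne)
    have := h1.2
    norm_num at this
  have hainf : ContDiff ℝ (⊤:ℕ∞) a := ha.of_le (by simp)
  have hderiv_a : ContDiff ℝ (⊤:ℕ∞) (deriv a) := (contDiff_infty_iff_deriv.mp hainf).2
  have ha'1 : deriv a 1 = 0 := by
    have hev : a =ᶠ[nhds (1:ℝ)] fun _ => 0 := by
      filter_upwards [Ioi_mem_nhds (show (1:ℝ)/10 < 1 by norm_num)] with x hx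
      by_contra hne
      have h1 := hsupp (Function.mem_support.mpr hne)
      exact absurd h1.2 (not_lt.mpr (le_of_lt hx))
    rw [hev.deriv_eq]
    exact deriv_const 1 0
  have hnormc : ∀ τ : ℝ, ‖-(Complex.I * (τ:ℂ))‖ = |τ| := by
    intro τ
    simp
  -- integration by parts identities
  have hIBP1 : ∀ τ : ℝ, -(Complex.I * τ) * g τ = -1 - h τ := by
    intro τ
    have hkey := stmt11_aux_ibp a hainf τ
    rw [ha1, ha0] at hkey
    linear_combination hkey
  have hIBP2 : ∀ τ : ℝ, -(Complex.I * τ) * h τ = -(deriv a 0) -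
      ∫ s in (0:ℝ)..1, deriv (deriv a) s * Complex.exp (-(Complex.I * (s:ℂ) * (τ:ℂ))) := by
    intro τ
    have hkey := stmt11_aux_ibp (deriv a) hderiv_a τ
    rw [ha'1] at hkey
    linear_combination hkey
  set C : ℝ := ‖deriv a 0‖ + ∫ s in (0:ℝ)..1, ‖deriv (deriv a) s‖ with hCdef
  have hC0 : 0 ≤ C := add_nonneg (norm_nonneg _)
    (intervalIntegral.integral_nonneg zero_le_one fun s _ => norm_nonneg _)
  have hhB : ∀ τ : ℝ, |τ| * ‖h τ‖ ≤ C := by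
    intro τ
    have h1 : ‖-(Complex.I * (τ:ℂ)) * h τ‖ = |τ| * ‖h τ‖ := by
      rw [norm_mul, hnormc]
    rw [← h1, hIBP2 τ]
    refine le_trans (norm_sub_le _ _) ?_
    exact add_le_add (le_of_eq (norm_neg _)) (stmt11_aux_norm _ τ)
  have hgId : ∀ τ : ℝ, |τ| * ‖g τ‖ = ‖(-1 : ℂ) - h τ‖ := by
    intro τ
    rw [← hnormc τ, ← norm_mul, hIBP1 τ]
  set M : ℝ := ∫ s in (0:ℝ)..1, ‖a s‖ with hMdef
  have hM0 : 0 ≤ M := intervalIntegral.integral_nonneg zero_le_one fun s _ => norm_nonneg _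
  have hgM : ∀ τ : ℝ, ‖g τ‖ ≤ M := fun τ => stmt11_aux_norm a τ
  have hgup : ∀ τ : ℝ, 1 ≤ |τ| → |τ| * ‖g τ‖ ≤ 1 + C := by
    intro τ hτ
    rw [hgId τ]
    refine le_trans (norm_sub_le _ _) ?_
    have hh : ‖h τ‖ ≤ C := by nlinarith [hhB τ, norm_nonneg (h τ)]
    have : ‖(-1 : ℂ)‖ = 1 := by simp
    rw [this]
    linarith
  set D : ℝ := 2 * (M ^ 2 + (1 + C) ^ 2) with hDdef
  have hsq : ∀ τ : ℝ, ‖g τ‖ ^ 2 ≤ D / (1 + τ ^ 2) := by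
    intro τ
    rw [le_div_iff₀ (by positivity)]
    rcases le_total 1 |τ| with hτ | hτ
    · have h1 := hgup τ hτ
      have h2 : ‖g τ‖ ^ 2 ≤ M ^ 2 := by nlinarith [hgM τ, norm_nonneg (g τ)]
      have h3 : ‖g τ‖ ^ 2 * τ ^ 2 ≤ (1 + C) ^ 2 := by
        have h4 : (|τ| * ‖g τ‖) ^ 2 ≤ (1 + C) ^ 2 := by
          nlinarith [mul_nonneg (abs_nonneg τ) (norm_nonneg (g τ))]
        calc ‖g τ‖ ^ 2 * τ ^ 2 = (|τ| * ‖g τ‖) ^ 2 := by rw [mul_pow, sq_abs]; ring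
          _ ≤ (1 + C) ^ 2 := h4
      nlinarith [sq_nonneg M, sq_nonneg (1 + C)]
    · have h2 : τ ^ 2 ≤ 1 := by nlinarith [sq_abs τ, abs_nonneg τ]
      nlinarith [hgM τ, norm_nonneg (g τ), sq_nonneg (1 + C), sq_nonneg M]
  have hglow : ∀ τ : ℝ, 2 * C + 1 ≤ τ → 1 / (2 * τ) ≤ ‖g τ‖ := by
    intro τ hτ
    have hτ0 : 0 < τ := by linarith
    have habs : |τ| = τ := abs_of_pos hτ0
    have hh2 : ‖h τ‖ ≤ 1 / 2 := by
      have h1 := hhB τ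
      rw [habs] at h1
      nlinarith
    have h5 : 1 / 2 ≤ ‖(-1 : ℂ) - h τ‖ := by
      have h6 := norm_sub_norm_le (-1 : ℂ) (h τ)
      have h7 : ‖(-1 : ℂ)‖ = 1 := by simp
      rw [h7] at h6
      linarith
    have h8 := hgId τ
    rw [habs] at h8
    rw [div_le_iff₀ (by positivity)]
    nlinarith
  constructor
  · -- part (i)
    simp only [haux]
    have hmaj : ∀ x ∈ Set.Ioi (0:ℝ),
        ENNReal.ofReal (‖g (η * Real.log x)‖ ^ 2 / x) ≤
        ENNReal.ofReal (D / ((1 + (η * Real.log x) ^ 2) * x)) := by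
      intro x hx
      have hx0 : (0:ℝ) < x := hx
      apply ENNReal.ofReal_le_ofReal
      rw [← div_div]
      gcongr
      exact hsq (η * Real.log x)
    have hint : IntegrableOn (fun x => D / ((1 + (η * Real.log x) ^ 2) * x)) (Set.Ioi (0:ℝ)) := by
      have himg : Set.Ioi (0:ℝ) = Real.exp '' Set.univ := by
        rw [Set.image_univ, Real.range_exp]
      rw [himg, integrableOn_image_iff_integrableOn_abs_deriv_smul MeasurableSet.univ
        (fun x _ => (Real.hasDerivAt_exp x).hasDerivWithinAt) Real.exp_injective.injOn]
      rw [integrableOn_univ]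
      have heq : (fun t => |Real.exp t| • (D / ((1 + (η * Real.log (Real.exp t)) ^ 2) * Real.exp t)))
          = fun t => D * (1 + (η * t) ^ 2)⁻¹ := by
        funext t
        have h1 : Real.exp t ≠ 0 := Real.exp_ne_zero t
        have h2 : (1 + (η * t) ^ 2) ≠ 0 := by positivity
        rw [Real.log_exp, smul_eq_mul, abs_of_pos (Real.exp_pos t)]
        field_simp
      rw [heq]
      exact (integrable_inv_one_add_sq.comp_mul_left' (R := η) hη0.ne').const_mul D
    exact lt_of_le_of_lt (setLIntegral_mono' measurableSet_Ioi hmaj) hint.lintegral_lt_top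
  · -- part (ii)
    simp only [haux]
    have hq0 : (0:ℝ) < q := by linarith
    have hev : ∀ᶠ x : ℝ in Filter.atTop,
        1 ≤ x ^ (q / 2) * ‖g (η * Real.log x)‖ ^ q / x := by
      have hε : (0:ℝ) < (q - 2) / (4 * q) := div_pos (by linarith) (by linarith)
      have h3 := (isLittleO_log_rpow_atTop hε).bound (show (0:ℝ) < 1/2 by norm_num)
      have h1 : ∀ᶠ x : ℝ in Filter.atTop, Real.exp ((2 * C + 1) / η) ≤ x :=
        Filter.eventually_ge_atTop _
      have h2 : ∀ᶠ x : ℝ in Filter.atTop, (1:ℝ) ≤ x := Filter.eventually_ge_atTop 1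
      filter_upwards [h1, h2, h3] with x hx1 hx2 hx3
      have hx0 : (0:ℝ) < x := by linarith
      have hlog0 : 0 ≤ Real.log x := Real.log_nonneg hx2
      have hτle : (2 * C + 1) ≤ η * Real.log x := by
        have hle : (2 * C + 1) / η ≤ Real.log x :=
          (Real.le_log_iff_exp_le hx0).mpr hx1
        calc 2 * C + 1 = η * ((2 * C + 1) / η) := by field_simp
          _ ≤ η * Real.log x := by
              exact mul_le_mul_of_nonneg_left hle hη0.le
      set τ : ℝ := η * Real.log x with hτdef
      have hτpos : 0 < τ := by linarith
      have hglow' := hglow τ hτle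
      have hA : 2 * τ ≤ x ^ ((q - 2) / (4 * q)) := by
        rw [Real.norm_eq_abs, Real.norm_eq_abs, abs_of_nonneg hlog0,
          abs_of_nonneg (Real.rpow_nonneg hx0.le _)] at hx3
        have hτlog : τ ≤ Real.log x := by
          rw [hτdef]
          nlinarith
        linarith
      have hAq : (2 * τ) ^ q ≤ x ^ ((q - 2) / (4 * q) * q) := by
        rw [Real.rpow_mul hx0.le]
        exact Real.rpow_le_rpow (by positivity) hA hq0.le
      have hexp : (q - 2) / (4 * q) * q ≤ q / 2 - 1 := by
        have heq2 : (q - 2) / (4 * q) * q = (q - 2) / 4 := by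
          field_simp
        rw [heq2]
        linarith
      have hB : (2 * τ) ^ q ≤ x ^ (q / 2 - 1) :=
        hAq.trans (Real.rpow_le_rpow_of_exponent_le hx2 hexp)
      have hgq : (1 / (2 * τ)) ^ q ≤ ‖g τ‖ ^ q :=
        Real.rpow_le_rpow (by positivity) hglow' hq0.le
      have h5 : (2 * τ) ^ q * (1 / (2 * τ)) ^ q ≤ x ^ (q / 2 - 1) * ‖g τ‖ ^ q :=
        mul_le_mul hB hgq (by positivity) (by positivity)
      have h6 : (2 * τ) ^ q * (1 / (2 * τ)) ^ q = 1 := by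
        rw [← Real.mul_rpow (by positivity) (by positivity),
          mul_one_div_cancel (by positivity : (0:ℝ) < 2 * τ).ne', Real.one_rpow]
      have hxne : x ^ (q / 2) / x = x ^ (q / 2 - 1) := by
        rw [Real.rpow_sub hx0, Real.rpow_one]
      calc (1:ℝ) ≤ x ^ (q / 2 - 1) * ‖g τ‖ ^ q := by linarith
        _ = x ^ (q / 2) * ‖g τ‖ ^ q / x := by rw [← hxne]; ring
    obtain ⟨R, hR⟩ := Filter.eventually_atTop.mp hev
    rw [← top_le_iff]
    calc (⊤ : ENNReal) = volume (Set.Ioi (max R 1)) := (Real.volume_Ioi).symm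
      _ = ∫⁻ _ in Set.Ioi (max R 1), 1 := (setLIntegral_one _).symm
      _ ≤ ∫⁻ x in Set.Ioi (max R 1),
            ENNReal.ofReal (x ^ (q / 2) * ‖g (η * Real.log x)‖ ^ q / x) := by
          refine setLIntegral_mono' measurableSet_Ioi fun x hx => ?_
          exact ENNReal.one_le_ofReal.mpr (hR x (le_of_lt (lt_of_le_of_lt (le_max_left R 1) hx)))
      _ ≤ ∫⁻ x in Set.Ioi 0,
            ENNReal.ofReal (x ^ (q / 2) * ‖g (η * Real.log x)‖ ^ q / x) := by
          refine lintegral_mono' (Measure.restrict_mono (Set.Ioi_subset_Ioi ?_) le_rfl) le_rfl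
          exact le_trans zero_le_one (le_max_right R 1)
end
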